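/- Let n ≥ 4 be an integer. For every integer k ≥ 0 the identity A^D(H_k) = Σ_{r=0}^{2n−2} (−q^{−2})^r·A^D(e^{λ_k^r + ρ}) + (−q^{−2})^{n−1}·A^D(e^{λ̄_k^{n−1} + ρ}) holds in R, where H_k := e^{ρ + k·ε_1}·∏_{i=2}^{n} (1 − q^{−2}·x_1^{−1}·x_i)·(1 − q^{−2}·x_1^{−1}·x_i^{−1}), for 0 ≤ r ≤ 2n−2 one sets r̄ := min{r, 2n−2−r} and λ_k^r := (k−r)·ε_1 + ε_2 + ⋯ + ε_{r̄+1} (the sum ε_2 + ⋯ + ε_{r̄+1} being empty when r̄ = 0), and λ̄_k^{n−1} := (k−n+1)·ε_1 + ε_2 + ⋯ + ε_{n−1} − ε_n. (Key intermediate identity in the proof of the type D_n character reformulation theorem.) -/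

import Mathlib

/-!
`K = ℚ(q)` is modelled as `RatFunc ℚ` with `q = RatFunc.X`.
`R` is the group algebra of the additive group `ℚ^n` over `K`, modelled as
`AddMonoidAlgebra KK (Fin n → ℚ)`, with `e^λ` the basis element `single λ 1`.
The hyperoctahedral group `W_n` is modelled by pairs `(π, s)` of a permutation of
`Fin n` and a sign vector `s : Fin n → ℤˣ`.
-/

set_option maxHeartbeats 1000000
set_option synthInstance.maxHeartbeats 1000000

noncomputable section

abbrev KK : Type := RatFunc ℚ

/-- the indeterminate `q` of `K = ℚ(q)` -/
def qK : KK := RatFunc.X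

/-- the group algebra `R` of `ℚ^n` over `K` -/
abbrev RG (n : ℕ) : Type := AddMonoidAlgebra KK (Fin n → ℚ)

instance (n : ℕ) : IsDomain (RG n) := NoZeroDivisors.to_isDomain _

/-- the basis element `e^λ` of `R` -/
def expo {n : ℕ} (lam : Fin n → ℚ) : RG n := AddMonoidAlgebra.single lam 1

/-- action of `w = (π, s) ∈ W_n` on `λ ∈ ℚ^n`: `(w·λ)_i = s_i · λ_{π⁻¹(i)}` -/
def wmap {n : ℕ} (w : Equiv.Perm (Fin n) × (Fin n → ℤˣ)) (lam : Fin n → ℚ) : Fin n → ℚ :=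
  fun i => ((w.2 i : ℤ) : ℚ) * lam (w.1⁻¹ i)

/-- the sign character `sgn(w) = sign(π) · ∏_i s_i`, viewed in `K` -/
def sgnw {n : ℕ} (w : Equiv.Perm (Fin n) × (Fin n → ℤˣ)) : KK :=
  (((Equiv.Perm.sign w.1) * ∏ i, w.2 i : ℤˣ) : ℤ)

/-- the antisymmetrizer `A(f) = Σ_{w ∈ W_n} sgn(w) · (w·f)` (the action of `w`
on `R` being the `K`-linear extension of `e^λ ↦ e^{w·λ}`) -/
def asym {n : ℕ} (f : RG n) : RG n :=
  ∑ w : Equiv.Perm (Fin n) × (Fin n → ℤˣ), sgnw w • AddMonoidAlgebra.mapDomain (wmap w) f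

/-- the type-D antisymmetrizer `A^D(f) = Σ_{w ∈ W_n^D} sgn(w) · (w·f)`, summing only
over the even hyperoctahedral group `W_n^D = {(π,s) : ∏_i s_i = 1}` -/
def asymD {n : ℕ} (f : RG n) : RG n :=
  ∑ w ∈ Finset.univ.filter
      (fun w : Equiv.Perm (Fin n) × (Fin n → ℤˣ) => (∏ i, w.2 i) = 1),
    sgnw w • AddMonoidAlgebra.mapDomain (wmap w) f

/-- `ε_i`, the `i`-th (1-indexed) standard basis vector of `ℚ^n` -/
def eps (n i : ℕ) : Fin n → ℚ := fun j => if (j : ℕ) + 1 = i then 1 else 0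

/-- the type `D_n` half-sum of positive roots `ρ = Σ_i (n - i) ε_i` -/
def rhoD (n : ℕ) : Fin n → ℚ := fun j => (n : ℚ) - ((j : ℕ) : ℚ) - 1

/-- the type `D_n` auxiliary element
`H_k = e^{ρ + k ε_1} ∏_{i=2}^n (1 - q⁻² x_1⁻¹ x_i)(1 - q⁻² x_1⁻¹ x_i⁻¹) ∈ R` -/
def HD (n k : ℕ) : RG n :=
  expo (rhoD n + (k : ℚ) • eps n 1) *
    ∏ i ∈ Finset.Icc 2 n,
      ((1 - algebraMap KK (RG n) (qK⁻¹ ^ 2) * expo (-(eps n 1)) * expo (eps n i)) *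
       (1 - algebraMap KK (RG n) (qK⁻¹ ^ 2) * expo (-(eps n 1)) * expo (-(eps n i))))

/-- the type `D_n` hook weight `λ_k^r = (k - r) ε_1 + ε_2 + ⋯ + ε_{r̄+1}`,
where `r̄ = min {r, 2n - 2 - r}` -/
def lamD (n k r : ℕ) : Fin n → ℚ :=
  ((k : ℚ) - (r : ℚ)) • eps n 1 + ∑ i ∈ Finset.Icc 2 (min r (2 * n - 2 - r) + 1), eps n i

/-- the type `D_n` weight `λ̄_k^{n-1} = (k - n + 1) ε_1 + ε_2 + ⋯ + ε_{n-1} - ε_n` -/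
def lamDbar (n k : ℕ) : Fin n → ℚ :=
  ((k : ℚ) - (n : ℚ) + 1) • eps n 1 + ∑ i ∈ Finset.Icc 2 (n - 1), eps n i - eps n n

section Group
variable {n : ℕ}

abbrev Wn (n : ℕ) := Equiv.Perm (Fin n) × (Fin n → ℤˣ)

def wmul (w v : Wn n) : Wn n := (w.1 * v.1, fun i => w.2 i * v.2 (w.1⁻¹ i))

def winv (w : Wn n) : Wn n := (w.1⁻¹, fun i => (w.2 (w.1 i))⁻¹)

lemma wmap_wmul (w v : Wn n) (lam : Fin n → ℚ) :
    wmap (wmul w v) lam = wmap w (wmap v lam) := by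
  funext i
  simp only [wmap, wmul, mul_inv_rev, Equiv.Perm.mul_apply, Units.val_mul, Int.cast_mul]
  ring

lemma prod_snd_wmul (w v : Wn n) :
    (∏ i, (wmul w v).2 i) = (∏ i, w.2 i) * ∏ i, v.2 i := by
  simp only [wmul, Finset.prod_mul_distrib]
  congr 1
  exact Equiv.prod_comp w.1⁻¹ (fun i => v.2 i)

lemma sgnw_wmul (w v : Wn n) : sgnw (wmul w v) = sgnw w * sgnw v := by
  simp only [sgnw, wmul]
  have h1 : (∏ i, w.2 i * v.2 (w.1⁻¹ i)) = (∏ i, w.2 i) * ∏ i, v.2 i := by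
    rw [Finset.prod_mul_distrib]
    congr 1
    exact Equiv.prod_comp w.1⁻¹ (fun i => v.2 i)
  have h2 : Equiv.Perm.sign (w.1 * v.1) = Equiv.Perm.sign w.1 * Equiv.Perm.sign v.1 :=
    map_mul _ _ _
  rw [h1, h2]
  push_cast
  ring

lemma sgnw_mul_self (w : Wn n) : sgnw w * sgnw w = 1 := by
  simp only [sgnw]
  rw [← Int.cast_mul, ← Units.val_mul, Int.units_mul_self]
  norm_num

lemma wmul_winv (w t : Wn n) : wmul (wmul w t) (winv t) = w := by
  refine Prod.ext ?_ ?_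
  · simp [wmul, winv, mul_assoc]
  · funext i
    simp only [wmul, winv, mul_inv_rev, Equiv.Perm.mul_apply]
    rw [show ∀ (f : Equiv.Perm (Fin n)) (x : Fin n), f (f⁻¹ x) = x from fun f x => f.apply_symm_apply x]
    rw [mul_assoc, mul_inv_cancel, mul_one]

lemma winv_wmul (w t : Wn n) : wmul (wmul w (winv t)) t = w := by
  refine Prod.ext ?_ ?_
  · simp [wmul, winv, mul_assoc]
  · funext i
    simp only [wmul, winv, mul_inv_rev, Equiv.Perm.mul_apply, inv_inv]
    rw [mul_assoc, inv_mul_cancel, mul_one]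

/-- the index set of `asymD` -/
def SD (n : ℕ) : Finset (Wn n) :=
  Finset.univ.filter (fun w : Wn n => (∏ i, w.2 i) = 1)

lemma asymD_expo (nu : Fin n → ℚ) :
    asymD (expo nu) = ∑ w ∈ SD n, sgnw w • expo (wmap w nu) := by
  unfold asymD SD expo
  refine Finset.sum_congr rfl (fun w _ => ?_)
  rw [AddMonoidAlgebra.mapDomain_single]

lemma wmul_mem_SD {w t : Wn n} (hw : w ∈ SD n) (ht : (∏ i, t.2 i) = 1) :
    wmul w t ∈ SD n := by
  simp only [SD, Finset.mem_filter, Finset.mem_univ, true_and] at hw ⊢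
  rw [prod_snd_wmul, hw, ht, one_mul]

lemma prod_snd_winv {t : Wn n} (ht : (∏ i, t.2 i) = 1) : (∏ i, (winv t).2 i) = 1 := by
  simp only [winv]
  have : (∏ i, (t.2 (t.1 i))⁻¹) = (∏ i, t.2 (t.1 i))⁻¹ := by
    rw [← Finset.prod_inv_distrib]
  rw [this, Equiv.prod_comp t.1 (fun i => t.2 i), ht, inv_one]

lemma asymD_wmap {t : Wn n} (ht : (∏ i, t.2 i) = 1) (nu : Fin n → ℚ) :
    asymD (expo (wmap t nu)) = sgnw t • asymD (expo nu) := by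
  rw [asymD_expo, asymD_expo, Finset.smul_sum]
  refine Finset.sum_nbij' (i := fun w => wmul w t) (j := fun w => wmul w (winv t))
    ?_ ?_ ?_ ?_ ?_
  · intro a ha; exact wmul_mem_SD ha ht
  · intro a ha; exact wmul_mem_SD ha (prod_snd_winv ht)
  · intro a _; exact wmul_winv a t
  · intro a _; exact winv_wmul a t
  · intro a _
    rw [sgnw_wmul, wmap_wmul, smul_smul]
    congr 1
    calc sgnw a = sgnw a * (sgnw t * sgnw t) := by rw [sgnw_mul_self, mul_one]
    _ = sgnw t * (sgnw a * sgnw t) := by ring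

end Group
section Vanish
variable {n : ℕ}

lemma asymD_neg_self {X : RG n} (h : X = -X) : X = 0 := by
  have h2 : (2 : ℚ) • X = 0 := by
    rw [two_smul]
    nth_rewrite 1 [h]
    exact neg_add_cancel X
  rcases smul_eq_zero.mp h2 with h3 | h3
  · exact absurd h3 (by norm_num)
  · exact h3

lemma asymD_zero_of_eq {nu : Fin n → ℚ} {i j : Fin n} (hij : i ≠ j) (h : nu i = nu j) :
    asymD (expo nu) = 0 := by
  set t : Wn n := (Equiv.swap i j, 1) with hts
  have ht : (∏ l, t.2 l) = 1 := by simp [hts]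
  have hw : wmap t nu = nu := by
    funext l
    simp only [wmap, hts, Pi.one_apply, Units.val_one, Int.cast_one, one_mul]
    rw [show (Equiv.swap i j)⁻¹ = Equiv.swap i j from Equiv.swap_inv i j]
    rcases eq_or_ne l i with rfl | hli
    · rw [Equiv.swap_apply_left]; exact h.symm
    rcases eq_or_ne l j with rfl | hlj
    · rw [Equiv.swap_apply_right]; exact h
    · rw [Equiv.swap_apply_of_ne_of_ne hli hlj]
  have hs : sgnw t = -1 := by
    simp only [sgnw, hts]
    rw [Equiv.Perm.sign_swap hij]
    simp
  have := asymD_wmap ht nu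
  rw [hw, hs, neg_smul, one_smul] at this
  exact asymD_neg_self this

def flipfun (i j : Fin n) : Fin n → ℤˣ := fun l => if l = i ∨ l = j then -1 else 1

lemma prod_flipfun {i j : Fin n} (hij : i ≠ j) : (∏ l, flipfun i j l) = 1 := by
  have hsub : ({i, j} : Finset (Fin n)) ⊆ Finset.univ := Finset.subset_univ _
  rw [← Finset.prod_sdiff hsub]
  have h1 : (∏ l ∈ Finset.univ \ {i, j}, flipfun i j l) = 1 := by
    apply Finset.prod_eq_one
    intro x hx
    simp only [Finset.mem_sdiff, Finset.mem_insert, Finset.mem_singleton] at hx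
    simp only [flipfun]
    rw [if_neg (by tauto)]
  have h2 : (∏ l ∈ ({i, j} : Finset (Fin n)), flipfun i j l) = 1 := by
    rw [Finset.prod_pair hij]
    simp [flipfun]
  rw [h1, h2, one_mul]

lemma asymD_zero_of_eq_neg {nu : Fin n → ℚ} {i j : Fin n} (hij : i ≠ j) (h : nu i = -nu j) :
    asymD (expo nu) = 0 := by
  set t : Wn n := (Equiv.swap i j, flipfun i j) with hts
  have ht : (∏ l, t.2 l) = 1 := prod_flipfun hij
  have hw : wmap t nu = nu := by
    funext l
    simp only [wmap, hts]
    rw [show (Equiv.swap i j)⁻¹ = Equiv.swap i j from Equiv.swap_inv i j]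
    rcases eq_or_ne l i with rfl | hli
    · rw [Equiv.swap_apply_left]
      have hf : flipfun l j l = -1 := by simp [flipfun]
      rw [hf, h]; push_cast; ring
    rcases eq_or_ne l j with rfl | hlj
    · rw [Equiv.swap_apply_right]
      have hf : flipfun i l l = -1 := by simp [flipfun]
      rw [hf, h]; push_cast; ring
    · rw [Equiv.swap_apply_of_ne_of_ne hli hlj]
      simp [flipfun, hli, hlj]
  have hs : sgnw t = -1 := by
    simp only [sgnw, hts]
    rw [Equiv.Perm.sign_swap hij, prod_flipfun hij]
    simp
  have := asymD_wmap ht nu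
  rw [hw, hs, neg_smul, one_smul] at this
  exact asymD_neg_self this

lemma asymD_smul (c : KK) (f : RG n) : asymD (c • f) = c • asymD f := by
  unfold asymD
  rw [Finset.smul_sum]
  refine Finset.sum_congr rfl (fun w _ => ?_)
  rw [AddMonoidAlgebra.mapDomain_vadd, smul_comm]

lemma asymD_sum {ι : Type*} (s : Finset ι) (g : ι → RG n) :
    asymD (∑ x ∈ s, g x) = ∑ x ∈ s, asymD (g x) := by
  unfold asymD
  rw [Finset.sum_comm]
  refine Finset.sum_congr rfl (fun w _ => ?_)
  rw [show AddMonoidAlgebra.mapDomain (R := KK) (wmap w) (∑ x ∈ s, g x)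
      = ∑ x ∈ s, AddMonoidAlgebra.mapDomain (wmap w) (g x) from
    map_sum (AddMonoidHom.mk' (AddMonoidAlgebra.mapDomain (R := KK) (wmap w))
      (AddMonoidAlgebra.mapDomain_add _)) g s, Finset.smul_sum]

end Vanish
section Expand
variable {n k : ℕ}

lemma expo_mul (a b : Fin n → ℚ) : expo a * expo b = expo (a + b) := by
  unfold expo
  rw [AddMonoidAlgebra.single_mul_single, one_mul]

lemma expo_zero : expo (0 : Fin n → ℚ) = 1 := rfl

lemma prod_smul_expo (S : Finset ℕ) (c : KK) (v : ℕ → Fin n → ℚ) :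
    (∏ i ∈ S, (c • expo (v i))) = (c ^ S.card) • expo (∑ i ∈ S, v i) := by
  classical
  induction S using Finset.induction_on with
  | empty => simp [expo_zero]
  | insert a s hx ih =>
    rw [Finset.prod_insert hx, ih, Finset.card_insert_of_notMem hx, Finset.sum_insert hx,
      smul_mul_smul_comm, expo_mul, pow_succ, mul_comm]

/-- the exponent vector of the `(S,T)` term in the expansion of `H_k` -/
def muST (n k : ℕ) (S T : Finset ℕ) : Fin n → ℚ := fun j =>
  (if (j : ℕ) = 0 then ((k : ℚ) - S.card - T.card) else 0) + rhoD n j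
    + (if ((j : ℕ) + 1) ∈ S then 1 else 0) - (if ((j : ℕ) + 1) ∈ T then 1 else 0)

lemma sum_eps (S : Finset ℕ) (j : Fin n) :
    (∑ i ∈ S, eps n i j) = if ((j : ℕ) + 1) ∈ S then 1 else 0 := by
  unfold eps
  exact Finset.sum_ite_eq S ((j : ℕ) + 1) (fun _ => (1 : ℚ))

lemma muST_eq {S T : Finset ℕ} (hS : S ⊆ Finset.Icc 2 n) (hT : T ⊆ Finset.Icc 2 n) :
    (rhoD n + (k : ℚ) • eps n 1) + ((∑ i ∈ S, (-(eps n 1) + eps n i))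
      + (∑ i ∈ T, (-(eps n 1) + -(eps n i)))) = muST n k S T := by
  have h1S : (1 : ℕ) ∉ S := fun h => by simpa using (Finset.mem_Icc.mp (hS h)).1
  have h1T : (1 : ℕ) ∉ T := fun h => by simpa using (Finset.mem_Icc.mp (hT h)).1
  funext j
  have hE1 : eps n 1 j = (if (j : ℕ) = 0 then (1:ℚ) else 0) := by
    unfold eps
    by_cases h : (j : ℕ) = 0
    · rw [if_pos (by omega), if_pos h]
    · rw [if_neg (by omega), if_neg h]
  have hSsum : (∑ i ∈ S, (-(eps n 1) + eps n i)) j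
      = -(S.card : ℚ) * (if (j : ℕ) = 0 then 1 else 0)
        + (if ((j : ℕ) + 1) ∈ S then 1 else 0) := by
    rw [Finset.sum_apply]
    simp only [Pi.add_apply, Pi.neg_apply]
    rw [Finset.sum_add_distrib, sum_eps, Finset.sum_neg_distrib, Finset.sum_const,
      nsmul_eq_mul, hE1]
    ring
  have hTsum : (∑ i ∈ T, (-(eps n 1) + -(eps n i))) j
      = -(T.card : ℚ) * (if (j : ℕ) = 0 then 1 else 0)
        - (if ((j : ℕ) + 1) ∈ T then 1 else 0) := by
    rw [Finset.sum_apply]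
    simp only [Pi.add_apply, Pi.neg_apply]
    rw [Finset.sum_add_distrib, Finset.sum_neg_distrib, Finset.sum_neg_distrib, sum_eps,
      Finset.sum_const, nsmul_eq_mul, hE1]
    ring
  simp only [Pi.add_apply, Pi.smul_apply, smul_eq_mul]
  rw [hE1, hSsum, hTsum]
  simp only [muST]
  by_cases hj : (j : ℕ) = 0
  · simp only [hj, if_pos rfl, zero_add]
    rw [if_neg h1S, if_neg h1T]
    push_cast
    ring
  · simp only [if_neg hj]
    push_cast
    ring

lemma HD_expand (n k : ℕ) :
    HD n k = ∑ p ∈ (Finset.Icc 2 n).powerset ×ˢ (Finset.Icc 2 n).powerset,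
      ((-(qK⁻¹ ^ 2)) ^ (p.1.card + p.2.card)) • expo (muST n k p.1 p.2) := by
  classical
  unfold HD
  set c2 : KK := qK⁻¹ ^ 2 with hc2
  have hA : ∀ i : ℕ, (1 - algebraMap KK (RG n) c2 * expo (-(eps n 1)) * expo (eps n i))
      = 1 + ((-c2) • expo (-(eps n 1) + eps n i)) := by
    intro i
    rw [mul_assoc, expo_mul, ← Algebra.smul_def, sub_eq_add_neg, ← neg_smul]
  have hB : ∀ i : ℕ, (1 - algebraMap KK (RG n) c2 * expo (-(eps n 1)) * expo (-(eps n i)))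
      = 1 + ((-c2) • expo (-(eps n 1) + -(eps n i))) := by
    intro i
    rw [mul_assoc, expo_mul, ← Algebra.smul_def, sub_eq_add_neg, ← neg_smul]
  simp only [hA, hB]
  rw [Finset.prod_mul_distrib]
  have hprod : ∀ v : ℕ → Fin n → ℚ,
      (∏ i ∈ Finset.Icc 2 n, (1 + (-c2) • expo (v i)))
        = ∑ S ∈ (Finset.Icc 2 n).powerset, ((-c2) ^ S.card) • expo (∑ i ∈ S, v i) := by
    intro v
    rw [Finset.prod_congr rfl (fun i _ => add_comm 1 ((-c2) • expo (v i))),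
      Finset.prod_add]
    refine Finset.sum_congr rfl (fun S hS => ?_)
    rw [Finset.prod_const_one, mul_one, prod_smul_expo]
  rw [hprod, hprod, Finset.sum_mul_sum, Finset.mul_sum]
  rw [Finset.sum_product]
  refine Finset.sum_congr rfl (fun S hS => ?_)
  rw [Finset.mul_sum]
  refine Finset.sum_congr rfl (fun T hT => ?_)
  rw [smul_mul_smul_comm, ← pow_add, expo_mul, mul_smul_comm, expo_mul]
  rw [muST_eq (Finset.mem_powerset.mp hS) (Finset.mem_powerset.mp hT)]

lemma asymD_HD (n k : ℕ) :
    asymD (HD n k) = ∑ p ∈ (Finset.Icc 2 n).powerset ×ˢ (Finset.Icc 2 n).powerset,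
      ((-(qK⁻¹ ^ 2)) ^ (p.1.card + p.2.card)) • asymD (expo (muST n k p.1 p.2)) := by
  rw [HD_expand, asymD_sum]
  exact Finset.sum_congr rfl (fun p _ => asymD_smul _ _)

end Expand
section Comb
variable {n k : ℕ}

/-- the canonical pair realizing `λ_k^r` -/
def canPair (n r : ℕ) : Finset ℕ × Finset ℕ :=
  if r + 1 ≤ n then (Finset.Icc 2 (r+1), ∅) else (Finset.Icc 2 n, Finset.Icc (2*n - r) n)

/-- the canonical pair realizing `λ̄_k^{n-1}` -/
def lamPair (n : ℕ) : Finset ℕ × Finset ℕ := (Finset.Icc 2 (n-1), ({n} : Finset ℕ))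

/-- the set of canonical pairs -/
def Can (n : ℕ) : Finset (Finset ℕ × Finset ℕ) :=
  ((Finset.range (2*n-1)).image (canPair n)) ∪ {lamPair n}

/-- a "defect" of the pair `(S,T)` at position `i`: either a `(-1,+1)` zigzag
(`i ∈ T \ S`, `i+1 ∈ S \ T`) or a double-pick followed by a blank
(`i ∈ S ∩ T`, `i+1 ∉ S ∪ T`) -/
def defect (S T : Finset ℕ) (i : ℕ) : Prop :=
  (i ∈ T ∧ i ∉ S ∧ (i+1) ∈ S ∧ (i+1) ∉ T) ∨ (i ∈ S ∧ i ∈ T ∧ (i+1) ∉ S ∧ (i+1) ∉ T)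

instance (S T : Finset ℕ) : DecidablePred (defect S T) := fun i => by
  unfold defect; infer_instance

/-- the set of defects of `(S,T)` -/
def Dset (n : ℕ) (S T : Finset ℕ) : Finset ℕ :=
  (Finset.Icc 2 (n-1)).filter (defect S T)

def F1pair (n p c : ℕ) : Finset ℕ × Finset ℕ :=
  (Finset.Icc 2 (p+1) ∪ Finset.Icc c (n-2), Finset.Icc c n)

def F2pair (n p c : ℕ) : Finset ℕ × Finset ℕ :=
  (Finset.Icc 2 (p+1) ∪ Finset.Icc c n, Finset.Icc c n)

def pOf (ST : Finset ℕ × Finset ℕ) : ℕ := (ST.1 \ ST.2).card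

def cOf (n : ℕ) (ST : Finset ℕ × Finset ℕ) : ℕ := n + 1 - ST.2.card

def IsF1 (n : ℕ) (ST : Finset ℕ × Finset ℕ) : Prop :=
  ST = F1pair n (pOf ST) (cOf n ST) ∧ pOf ST + 2 ≤ cOf n ST ∧ cOf n ST ≤ n - 1

def IsF2 (n : ℕ) (ST : Finset ℕ × Finset ℕ) : Prop :=
  ST = F2pair n (pOf ST) (cOf n ST) ∧ pOf ST + 3 ≤ cOf n ST ∧ cOf n ST ≤ n

/-- toggling `S` at a defect site -/
def tog (S : Finset ℕ) (i : ℕ) : Finset ℕ :=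
  if i ∈ S then insert (i+1) (S.erase i) else insert i (S.erase (i+1))

open Classical in
/-- the sign-reversing involution on non-canonical pairs -/
noncomputable def gmap (n : ℕ) (ST : Finset ℕ × Finset ℕ) : Finset ℕ × Finset ℕ :=
  if h : (Dset n ST.1 ST.2).Nonempty then (tog ST.1 ((Dset n ST.1 ST.2).min' h), ST.2)
  else if IsF1 n ST then F2pair n (pOf ST) (cOf n ST + 1)
  else if IsF2 n ST then F1pair n (pOf ST) (cOf n ST - 1)
  else ST

lemma mem_tog_other {S : Finset ℕ} {i x : ℕ} (h1 : x ≠ i) (h2 : x ≠ i + 1) :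
    x ∈ tog S i ↔ x ∈ S := by
  unfold tog
  by_cases hi : i ∈ S <;>
    simp [hi, Finset.mem_insert, Finset.mem_erase, h1, h2]

lemma tog_mem_left {S T : Finset ℕ} {i : ℕ} (hd : defect S T i) :
    (i ∈ tog S i ↔ i ∉ S) ∧ (i + 1 ∈ tog S i ↔ i + 1 ∉ S) := by
  rcases hd with ⟨hiT, hiS, h1S, h1T⟩ | ⟨hiS, hiT, h1S, h1T⟩
  · rw [tog, if_neg hiS]
    constructor
    · simp [Finset.mem_insert, hiS]
    · simp only [Finset.mem_insert, Finset.mem_erase]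
      simp [h1S]
      try omega
  · rw [tog, if_pos hiS]
    constructor
    · simp only [Finset.mem_insert, Finset.mem_erase]
      simp [hiS]
      try omega
    · simp [Finset.mem_insert, h1S]

lemma tog_card {S T : Finset ℕ} {i : ℕ} (hd : defect S T i) :
    (tog S i).card = S.card := by
  rcases hd with ⟨hiT, hiS, h1S, h1T⟩ | ⟨hiS, hiT, h1S, h1T⟩
  · rw [tog, if_neg hiS]
    rw [Finset.card_insert_of_notMem (by simp [Finset.mem_erase, hiS]),
      Finset.card_erase_of_mem h1S]
    have : 0 < S.card := Finset.card_pos.mpr ⟨i+1, h1S⟩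
    omega
  · rw [tog, if_pos hiS]
    rw [Finset.card_insert_of_notMem (by simp [Finset.mem_erase, h1S]),
      Finset.card_erase_of_mem hiS]
    have : 0 < S.card := Finset.card_pos.mpr ⟨i, hiS⟩
    omega

lemma tog_tog {S T : Finset ℕ} {i : ℕ} (hd : defect S T i) :
    tog (tog S i) i = S := by
  rcases hd with ⟨hiT, hiS, h1S, h1T⟩ | ⟨hiS, hiT, h1S, h1T⟩
  · have e1 : tog S i = insert i (S.erase (i+1)) := by rw [tog, if_neg hiS]
    have e2 : i ∈ tog S i := by rw [e1]; exact Finset.mem_insert_self _ _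
    rw [tog, if_pos e2, e1]
    ext a
    simp only [Finset.mem_insert, Finset.mem_erase]
    constructor
    · rintro (rfl | ⟨ha, (rfl | ⟨hb, hc⟩)⟩)
      · exact h1S
      · exact absurd rfl ha
      · exact hc
    · intro ha
      by_cases h : a = i + 1
      · exact Or.inl h
      · exact Or.inr ⟨fun he => hiS (he ▸ ha), Or.inr ⟨h, ha⟩⟩
  · have e1 : tog S i = insert (i+1) (S.erase i) := by rw [tog, if_pos hiS]
    have e2 : i ∉ tog S i := by
      rw [e1]
      simp only [Finset.mem_insert, Finset.mem_erase]
      omega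
    rw [tog, if_neg e2, e1]
    ext a
    simp only [Finset.mem_insert, Finset.mem_erase]
    constructor
    · rintro (rfl | ⟨ha, (rfl | ⟨hb, hc⟩)⟩)
      · exact hiS
      · exact absurd rfl ha
      · exact hc
    · intro ha
      by_cases h : a = i
      · exact Or.inl h
      · exact Or.inr ⟨fun he => h1S (he ▸ ha), Or.inr ⟨h, ha⟩⟩

lemma tog_subset {S : Finset ℕ} {i : ℕ} (hS : S ⊆ Finset.Icc 2 n)
    (h2 : 2 ≤ i) (hi : i + 1 ≤ n) : tog S i ⊆ Finset.Icc 2 n := by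
  unfold tog
  by_cases h : i ∈ S <;>
  · simp only [if_pos, if_neg, h, ite_true, ite_false]
    intro x hx
    rcases Finset.mem_insert.mp hx with rfl | hx'
    · simp [Finset.mem_Icc]; omega
    · exact hS (Finset.mem_of_mem_erase hx')

lemma defect_tog {S T : Finset ℕ} {i : ℕ} (hd : defect S T i) :
    defect (tog S i) T i := by
  have hm := tog_mem_left hd
  rcases hd with ⟨hiT, hiS, h1S, h1T⟩ | ⟨hiS, hiT, h1S, h1T⟩
  · exact Or.inr ⟨hm.1.mpr hiS, hiT, fun h => (hm.2.mp h) h1S, h1T⟩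
  · exact Or.inl ⟨hiT, fun h => (hm.1.mp h) hiS, hm.2.mpr h1S, h1T⟩

lemma defect_tog_lt {S T : Finset ℕ} {i j : ℕ} (hd : defect S T i) (hj : j < i)
    (hnd : ¬ defect S T j) : ¬ defect (tog S i) T j := by
  by_cases hcase : j + 1 < i
  · intro h
    apply hnd
    have e1 : (j ∈ tog S i ↔ j ∈ S) := mem_tog_other (by omega) (by omega)
    have e2 : (j + 1 ∈ tog S i ↔ j + 1 ∈ S) := mem_tog_other (by omega) (by omega)
    unfold defect at h ⊢
    rw [e1, e2] at h
    exact h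
  · -- j = i - 1
    have hj1 : j + 1 = i := by omega
    subst hj1
    have hm := tog_mem_left hd
    rcases hd with ⟨hiT, hiS, h1S, h1T⟩ | ⟨hiS, hiT, h1S, h1T⟩
    · rintro (⟨_, _, _, hbad⟩ | ⟨_, _, hbad, _⟩)
      · exact hbad hiT
      · exact hbad (hm.1.mpr hiS)
    · rintro (⟨_, _, hbad, _⟩ | ⟨_, _, _, hbad⟩)
      · exact (hm.1.mp hbad) hiS
      · exact hbad hiT

lemma Dset_tog_min {S T : Finset ℕ} (h : (Dset n S T).Nonempty) :
    ∃ h2 : (Dset n (tog S ((Dset n S T).min' h)) T).Nonempty,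
      (Dset n (tog S ((Dset n S T).min' h)) T).min' h2 = (Dset n S T).min' h := by
  set i := (Dset n S T).min' h with hi
  have hmem : i ∈ Dset n S T := Finset.min'_mem _ h
  obtain ⟨hIcc, hd⟩ := Finset.mem_filter.mp hmem
  have hd' : defect (tog S i) T i := defect_tog hd
  have hmem' : i ∈ Dset n (tog S i) T := Finset.mem_filter.mpr ⟨hIcc, hd'⟩
  refine ⟨⟨i, hmem'⟩, ?_⟩
  apply le_antisymm (Finset.min'_le _ _ hmem')
  apply Finset.le_min'
  intro y hy
  by_contra hlt
  push_neg at hlt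
  obtain ⟨hyIcc, hyd⟩ := Finset.mem_filter.mp hy
  have hny : ¬ defect S T y := by
    intro hc
    have h4 := Finset.min'_le _ _ (show y ∈ Dset n S T from Finset.mem_filter.mpr ⟨hyIcc, hc⟩)
    have h3 : i ≤ y := h4
    omega
  exact defect_tog_lt hd hlt hny hyd

end Comb
section Toggle
variable {n k : ℕ}

lemma muST_apply (S T : Finset ℕ) (j : Fin n) :
    muST n k S T j = (if (j : ℕ) = 0 then ((k : ℚ) - S.card - T.card) else 0) + rhoD n j
      + (if ((j : ℕ) + 1) ∈ S then 1 else 0) - (if ((j : ℕ) + 1) ∈ T then 1 else 0) := rfl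

lemma rhoD_apply (j : Fin n) : rhoD n j = (n : ℚ) - ((j : ℕ) : ℚ) - 1 := rfl

lemma muST_tog_wmap {S T : Finset ℕ} {i : ℕ} (h2 : 2 ≤ i) (hi : i + 1 ≤ n)
    (hd : defect S T i) :
    muST n k (tog S i) T
      = wmap (Equiv.swap (⟨i - 1, by omega⟩ : Fin n) ⟨i, by omega⟩, 1) (muST n k S T) := by
  set a : Fin n := ⟨i - 1, by omega⟩ with ha
  set b : Fin n := ⟨i, by omega⟩ with hb
  have hva : (a : ℕ) = i - 1 := rfl
  have hvb : (b : ℕ) = i := rfl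
  have html := tog_mem_left hd
  funext j
  have hval : wmap (Equiv.swap a b, 1) (muST n k S T) j
      = muST n k S T (Equiv.swap a b j) := by
    simp [wmap, Equiv.swap_inv]
  rw [hval]
  rcases eq_or_ne j a with rfl | hja
  · rw [Equiv.swap_apply_left, muST_apply, muST_apply, hva, hvb]
    rw [show i - 1 + 1 = i from by omega]
    rw [if_neg (by omega : ¬ (i - 1 = 0)), if_neg (by omega : ¬ (i = 0))]
    rw [rhoD_apply, rhoD_apply, hva, hvb]
    rcases hd with ⟨hiT, hiS, h1S, h1T⟩ | ⟨hiS, hiT, h1S, h1T⟩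
    · rw [if_pos (html.1.mpr hiS), if_pos hiT, if_pos h1S, if_neg h1T]
      rw [show ((i - 1 : ℕ) : ℚ) = (i : ℚ) - 1 from by
        push_cast [Nat.cast_sub (by omega : 1 ≤ i)]; ring]
      ring
    · rw [if_neg (fun h => (html.1.mp h) hiS), if_pos hiT, if_neg h1S, if_neg h1T]
      rw [show ((i - 1 : ℕ) : ℚ) = (i : ℚ) - 1 from by
        push_cast [Nat.cast_sub (by omega : 1 ≤ i)]; ring]
      ring
  rcases eq_or_ne j b with rfl | hjb
  · rw [Equiv.swap_apply_right, muST_apply, muST_apply, hva, hvb]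
    rw [show i - 1 + 1 = i from by omega]
    rw [if_neg (by omega : ¬ (i - 1 = 0)), if_neg (by omega : ¬ (i = 0))]
    rw [rhoD_apply, rhoD_apply, hva, hvb]
    rcases hd with ⟨hiT, hiS, h1S, h1T⟩ | ⟨hiS, hiT, h1S, h1T⟩
    · rw [if_neg (fun h => (html.2.mp h) h1S), if_neg h1T, if_neg hiS, if_pos hiT]
      rw [show ((i - 1 : ℕ) : ℚ) = (i : ℚ) - 1 from by
        push_cast [Nat.cast_sub (by omega : 1 ≤ i)]; ring]
      ring
    · rw [if_pos (html.2.mpr h1S), if_neg h1T, if_pos hiS, if_pos hiT]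
      rw [show ((i - 1 : ℕ) : ℚ) = (i : ℚ) - 1 from by
        push_cast [Nat.cast_sub (by omega : 1 ≤ i)]; ring]
      ring
  · rw [Equiv.swap_apply_of_ne_of_ne hja hjb, muST_apply, muST_apply, tog_card hd]
    have hj1 : (j : ℕ) ≠ i - 1 := fun h => hja (Fin.ext (h.trans hva.symm))
    have hj2 : (j : ℕ) ≠ i := fun h => hjb (Fin.ext (h.trans hvb.symm))
    have hmem : ((j : ℕ) + 1 ∈ tog S i) ↔ ((j : ℕ) + 1 ∈ S) :=
      mem_tog_other (by omega) (by omega)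
    rw [if_congr hmem rfl rfl]

lemma asymD_tog {S T : Finset ℕ} {i : ℕ} (h2 : 2 ≤ i) (hi : i + 1 ≤ n)
    (hd : defect S T i) :
    asymD (expo (muST n k (tog S i) T)) = - asymD (expo (muST n k S T)) := by
  rw [muST_tog_wmap h2 hi hd]
  have hab : (⟨i - 1, by omega⟩ : Fin n) ≠ ⟨i, by omega⟩ := by
    simp [Fin.ext_iff]; omega
  have ht : (∏ l, ((Equiv.swap (⟨i - 1, by omega⟩ : Fin n) ⟨i, by omega⟩, (1 : Fin n → ℤˣ))).2 l) = 1 := by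
    simp
  rw [asymD_wmap ht]
  have hs : sgnw ((Equiv.swap (⟨i - 1, by omega⟩ : Fin n) ⟨i, by omega⟩, (1 : Fin n → ℤˣ))) = -1 := by
    simp only [sgnw]
    rw [Equiv.Perm.sign_swap hab]
    simp
  rw [hs, neg_smul, one_smul]

end Toggle
section Fpairs
variable {n k : ℕ}

lemma card_union_Icc {a b c d : ℕ} (h : b < c) :
    (Finset.Icc a b ∪ Finset.Icc c d).card = (Finset.Icc a b).card + (Finset.Icc c d).card := by
  apply Finset.card_union_of_disjoint
  rw [Finset.disjoint_left]
  intro x hx hx'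
  rw [Finset.mem_Icc] at hx hx'
  omega

lemma F1_cards {p c : ℕ} (hn : 4 ≤ n) (hpc : p + 2 ≤ c) (hc : c ≤ n - 1) :
    (F1pair n p c).1.card = p + (n - 1 - c) ∧ (F1pair n p c).2.card = n + 1 - c := by
  constructor
  · rw [F1pair]
    show (Finset.Icc 2 (p+1) ∪ Finset.Icc c (n-2)).card = _
    rw [card_union_Icc (by omega), Nat.card_Icc, Nat.card_Icc]
    omega
  · show (Finset.Icc c n).card = _
    rw [Nat.card_Icc]

lemma F2_cards {p c : ℕ} (hn : 4 ≤ n) (hpc : p + 3 ≤ c) (hc : c ≤ n) :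
    (F2pair n p c).1.card = p + (n + 1 - c) ∧ (F2pair n p c).2.card = n + 1 - c := by
  constructor
  · rw [F2pair]
    show (Finset.Icc 2 (p+1) ∪ Finset.Icc c n).card = _
    rw [card_union_Icc (by omega), Nat.card_Icc, Nat.card_Icc]
    omega
  · show (Finset.Icc c n).card = _
    rw [Nat.card_Icc]

lemma F1F2_card_sum {p c : ℕ} (hn : 4 ≤ n) (hpc : p + 2 ≤ c) (hc : c ≤ n - 1) :
    (F2pair n p (c+1)).1.card + (F2pair n p (c+1)).2.card
      = (F1pair n p c).1.card + (F1pair n p c).2.card := by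
  obtain ⟨e1, e2⟩ := F1_cards (p := p) (c := c) hn hpc hc
  obtain ⟨e3, e4⟩ := F2_cards (p := p) (c := c+1) hn (by omega) (by omega)
  rw [e1, e2, e3, e4]
  omega

lemma sgnw_swapflip {a b : Fin n} (hab : a ≠ b) :
    sgnw (Equiv.swap a b, flipfun a b) = -1 := by
  simp only [sgnw]
  rw [Equiv.Perm.sign_swap hab, prod_flipfun hab]
  simp

lemma muST_F1F2_wmap {p c : ℕ} (hn : 4 ≤ n) (hpc : p + 2 ≤ c) (hc : c ≤ n - 1) :
    muST n k (F2pair n p (c+1)).1 (F2pair n p (c+1)).2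
      = wmap (Equiv.swap (⟨n - 2, by omega⟩ : Fin n) ⟨n - 1, by omega⟩,
          flipfun ⟨n - 2, by omega⟩ ⟨n - 1, by omega⟩)
          (muST n k (F1pair n p c).1 (F1pair n p c).2) := by
  set a : Fin n := ⟨n - 2, by omega⟩ with ha
  set b : Fin n := ⟨n - 1, by omega⟩ with hb
  have hva : (a : ℕ) = n - 2 := rfl
  have hvb : (b : ℕ) = n - 1 := rfl
  have hab : a ≠ b := by simp [Fin.ext_iff, ha, hb]; omega
  funext j
  have hval : wmap (Equiv.swap a b, flipfun a b) (muST n k (F1pair n p c).1 (F1pair n p c).2) j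
      = ((flipfun a b j : ℤ) : ℚ) * muST n k (F1pair n p c).1 (F1pair n p c).2 (Equiv.swap a b j) := by
    simp [wmap, Equiv.swap_inv]
  rw [hval]
  rcases eq_or_ne j a with rfl | hja
  · have hf : flipfun a b a = -1 := by simp [flipfun]
    rw [hf, Equiv.swap_apply_left, muST_apply, muST_apply, rhoD_apply, rhoD_apply, hva, hvb]
    rw [if_neg (by omega : ¬ (n - 2 = 0)), if_neg (by omega : ¬ (n - 1 = 0))]
    rw [show n - 2 + 1 = n - 1 from by omega, show n - 1 + 1 = n from by omega]
    have hiff : (n - 1 ∈ (F2pair n p (c+1)).1) ↔ (n - 1 ∈ (F2pair n p (c+1)).2) := by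
      simp [F2pair, Finset.mem_union, Finset.mem_Icc]
      omega
    rw [if_congr hiff rfl rfl]
    rw [if_neg (show n ∉ (F1pair n p c).1 by
      simp [F1pair, Finset.mem_union, Finset.mem_Icc]; omega)]
    rw [if_pos (show n ∈ (F1pair n p c).2 by
      simp [F1pair, Finset.mem_Icc]; omega)]
    push_cast [Nat.cast_sub (by omega : 2 ≤ n), Nat.cast_sub (by omega : 1 ≤ n)]
    ring
  rcases eq_or_ne j b with rfl | hjb
  · have hf : flipfun a b b = -1 := by simp [flipfun]
    rw [hf, Equiv.swap_apply_right, muST_apply, muST_apply, rhoD_apply, rhoD_apply, hva, hvb]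
    rw [if_neg (by omega : ¬ (n - 2 = 0)), if_neg (by omega : ¬ (n - 1 = 0))]
    rw [show n - 2 + 1 = n - 1 from by omega, show n - 1 + 1 = n from by omega]
    rw [if_pos (show n ∈ (F2pair n p (c+1)).1 by
      simp [F2pair, Finset.mem_union, Finset.mem_Icc]; omega)]
    rw [if_pos (show n ∈ (F2pair n p (c+1)).2 by
      simp [F2pair, Finset.mem_Icc]; omega)]
    rw [if_neg (show n - 1 ∉ (F1pair n p c).1 by
      simp [F1pair, Finset.mem_union, Finset.mem_Icc]; omega)]
    rw [if_pos (show n - 1 ∈ (F1pair n p c).2 by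
      simp [F1pair, Finset.mem_Icc]; omega)]
    push_cast [Nat.cast_sub (by omega : 2 ≤ n), Nat.cast_sub (by omega : 1 ≤ n)]
    ring
  · have hf : flipfun a b j = 1 := by
      simp [flipfun, hja, hjb]
    rw [hf, Equiv.swap_apply_of_ne_of_ne hja hjb, muST_apply, muST_apply]
    have hj1 : (j : ℕ) ≠ n - 2 := fun h => hja (Fin.ext (h.trans hva.symm))
    have hj2 : (j : ℕ) ≠ n - 1 := fun h => hjb (Fin.ext (h.trans hvb.symm))
    have hjn : (j : ℕ) < n := j.isLt
    have hcards : ((k : ℚ) - (F2pair n p (c+1)).1.card - (F2pair n p (c+1)).2.card)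
        = (k : ℚ) - (F1pair n p c).1.card - (F1pair n p c).2.card := by
      have hsum := F1F2_card_sum (n := n) (p := p) (c := c) hn hpc hc
      calc ((k : ℚ) - (F2pair n p (c+1)).1.card - (F2pair n p (c+1)).2.card)
          = (k : ℚ) - (((F2pair n p (c+1)).1.card + (F2pair n p (c+1)).2.card : ℕ) : ℚ) := by
            push_cast; ring
        _ = (k : ℚ) - (((F1pair n p c).1.card + (F1pair n p c).2.card : ℕ) : ℚ) := by
            rw [hsum]
        _ = (k : ℚ) - (F1pair n p c).1.card - (F1pair n p c).2.card := by
            push_cast; ring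
    rw [if_congr Iff.rfl hcards rfl]
    push_cast [Units.val_one]
    rw [one_mul]
    rcases eq_or_ne ((j : ℕ) + 1) c with hvc | hvc
    · rw [if_neg (show (j:ℕ) + 1 ∉ (F2pair n p (c+1)).1 by
        simp [F2pair, Finset.mem_union, Finset.mem_Icc]; omega)]
      rw [if_neg (show (j:ℕ) + 1 ∉ (F2pair n p (c+1)).2 by
        simp [F2pair, Finset.mem_Icc]; omega)]
      rw [if_pos (show (j:ℕ) + 1 ∈ (F1pair n p c).1 by
        simp [F1pair, Finset.mem_union, Finset.mem_Icc]; omega)]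
      rw [if_pos (show (j:ℕ) + 1 ∈ (F1pair n p c).2 by
        simp [F1pair, Finset.mem_Icc]; omega)]
      ring
    · have hS : ((j:ℕ) + 1 ∈ (F2pair n p (c+1)).1) ↔ ((j:ℕ) + 1 ∈ (F1pair n p c).1) := by
        simp [F1pair, F2pair, Finset.mem_union, Finset.mem_Icc]
        omega
      have hT : ((j:ℕ) + 1 ∈ (F2pair n p (c+1)).2) ↔ ((j:ℕ) + 1 ∈ (F1pair n p c).2) := by
        simp [F1pair, F2pair, Finset.mem_Icc]
        omega
      rw [if_congr hS rfl rfl, if_congr hT rfl rfl]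

lemma asymD_F1F2 {p c : ℕ} (hn : 4 ≤ n) (hpc : p + 2 ≤ c) (hc : c ≤ n - 1) :
    asymD (expo (muST n k (F2pair n p (c+1)).1 (F2pair n p (c+1)).2))
      = - asymD (expo (muST n k (F1pair n p c).1 (F1pair n p c).2)) := by
  rw [muST_F1F2_wmap hn hpc hc]
  have hab : (⟨n - 2, by omega⟩ : Fin n) ≠ ⟨n - 1, by omega⟩ := by
    simp [Fin.ext_iff]; omega
  rw [asymD_wmap (prod_flipfun hab), sgnw_swapflip hab, neg_smul, one_smul]

lemma Dset_F1_empty {p c : ℕ} (hn : 4 ≤ n) (hpc : p + 2 ≤ c) (hc : c ≤ n - 1) :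
    Dset n (F1pair n p c).1 (F1pair n p c).2 = ∅ := by
  rw [Dset, Finset.filter_eq_empty_iff]
  intro i hi
  rw [Finset.mem_Icc] at hi
  unfold defect
  simp only [F1pair, Finset.mem_union, Finset.mem_Icc]
  omega

lemma Dset_F2_empty {p c : ℕ} (hn : 4 ≤ n) (hpc : p + 3 ≤ c) (hc : c ≤ n) :
    Dset n (F2pair n p c).1 (F2pair n p c).2 = ∅ := by
  rw [Dset, Finset.filter_eq_empty_iff]
  intro i hi
  rw [Finset.mem_Icc] at hi
  unfold defect
  simp only [F2pair, Finset.mem_union, Finset.mem_Icc]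
  omega

end Fpairs
section Structure
variable {n k : ℕ}

lemma lower_interval {A : Finset ℕ} {n : ℕ} (hA : A ⊆ Finset.Icc 2 n)
    (h : ∀ i, 2 ≤ i → i + 1 ∈ A → i ∈ A) : A = Finset.Icc 2 (A.card + 1) := by
  rcases A.eq_empty_or_nonempty with rfl | hne
  · rw [Finset.card_empty]
    exact (Finset.Icc_eq_empty (by omega)).symm
  · set m := A.max' hne with hm
    have key : ∀ d j, 2 ≤ j → j + d = m → j ∈ A := by
      intro d
      induction d with
      | zero =>
        intro j h2 hj
        have hjm : j = m := by omega
        rw [hjm]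
        exact A.max'_mem hne
      | succ d ih =>
        intro j h2 hj
        exact h j h2 (ih (j+1) (by omega) (by omega))
    have hm2 : 2 ≤ m := (Finset.mem_Icc.mp (hA (A.max'_mem hne))).1
    have hAe : A = Finset.Icc 2 m := by
      ext x
      rw [Finset.mem_Icc]
      constructor
      · intro hx
        exact ⟨(Finset.mem_Icc.mp (hA hx)).1, Finset.le_max' A x hx⟩
      · rintro ⟨hx2, hxm⟩
        exact key (m - x) x hx2 (by omega)
    have hcard : A.card = m - 1 := by
      rw [hAe, Nat.card_Icc]
      omega
    rw [show A.card + 1 = m from by omega]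
    exact hAe

lemma upper_interval {B : Finset ℕ} {N : ℕ} (hB : B ⊆ Finset.Icc 2 N)
    (h : ∀ i, i + 1 ≤ N → i ∈ B → i + 1 ∈ B) : B = Finset.Icc (N + 1 - B.card) N := by
  rcases B.eq_empty_or_nonempty with rfl | hne
  · rw [Finset.card_empty]
    exact (Finset.Icc_eq_empty (by omega)).symm
  · set m := B.min' hne with hm
    have hm2 : 2 ≤ m := (Finset.mem_Icc.mp (hB (B.min'_mem hne))).1
    have hmN : m ≤ N := (Finset.mem_Icc.mp (hB (B.min'_mem hne))).2
    have key : ∀ d j, j = m + d → j ≤ N → j ∈ B := by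
      intro d
      induction d with
      | zero =>
        intro j hj _
        have hjm : j = m := by omega
        rw [hjm]
        exact B.min'_mem hne
      | succ d ih =>
        intro j hj hjN
        have hprev := ih (m + d) rfl (by omega)
        have := h (m + d) (by omega) hprev
        rw [show j = m + d + 1 from by omega]
        exact this
    have hBe : B = Finset.Icc m N := by
      ext x
      rw [Finset.mem_Icc]
      constructor
      · intro hx
        exact ⟨Finset.min'_le B x hx, (Finset.mem_Icc.mp (hB hx)).2⟩
      · rintro ⟨hxm, hxN⟩
        exact key (x - m) x (by omega) hxN
    have hcard : B.card = N + 1 - m := by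
      rw [hBe, Nat.card_Icc]
    rw [show N + 1 - B.card = m from by omega]
    exact hBe

/-- the tail entry of `muST` at position `i` (`2 ≤ i ≤ n`), as a function of `i` -/
def vfn (n : ℕ) (S T : Finset ℕ) (i : ℕ) : ℚ :=
  (n : ℚ) - (i : ℚ) + (if i ∈ S then 1 else 0) - (if i ∈ T then 1 else 0)

lemma muST_eq_vfn {S T : Finset ℕ} {i : ℕ} (h2 : 2 ≤ i) (hi : i ≤ n) :
    muST n k S T ⟨i - 1, by omega⟩ = vfn n S T i := by
  rw [muST_apply, rhoD_apply]
  have hv : ((⟨i - 1, by omega⟩ : Fin n) : ℕ) = i - 1 := rfl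
  rw [hv, if_neg (by omega : ¬ (i - 1 = 0)), show i - 1 + 1 = i from by omega]
  rw [show ((i - 1 : ℕ) : ℚ) = (i : ℚ) - 1 from by
    push_cast [Nat.cast_sub (by omega : 1 ≤ i)]; ring]
  unfold vfn
  ring

lemma null_structure (hn : 4 ≤ n) {S T : Finset ℕ} (hS : S ⊆ Finset.Icc 2 n)
    (hT : T ⊆ Finset.Icc 2 n) (hD : Dset n S T = ∅) (hF1 : ¬ IsF1 n (S, T))
    (hF2 : ¬ IsF2 n (S, T)) (hc : (S, T) ∉ Can n) :
    asymD (expo (muST n k S T)) = 0 := by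
  by_contra h0
  have hne : ∀ i j : ℕ, 2 ≤ i → i < j → j ≤ n →
      vfn n S T i ≠ vfn n S T j ∧ vfn n S T i ≠ -vfn n S T j := by
    intro i j hi hij hj
    have hfne : (⟨i - 1, by omega⟩ : Fin n) ≠ ⟨j - 1, by omega⟩ := by
      simp [Fin.ext_iff]; omega
    constructor
    · intro he
      exact h0 (asymD_zero_of_eq hfne (by
        rw [muST_eq_vfn hi (by omega), muST_eq_vfn (by omega) hj]; exact he))
    · intro he
      exact h0 (asymD_zero_of_eq_neg hfne (by
        rw [muST_eq_vfn hi (by omega), muST_eq_vfn (by omega) hj]; exact he))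
  have hZ : ∀ i, 2 ≤ i → i + 1 ≤ n → ¬(i ∈ T ∧ i ∉ S ∧ (i+1) ∈ S ∧ (i+1) ∉ T) := by
    intro i h2 hi hcon
    have hmem : i ∈ Dset n S T :=
      Finset.mem_filter.mpr ⟨Finset.mem_Icc.mpr ⟨h2, by omega⟩, Or.inl hcon⟩
    rw [hD] at hmem
    exact absurd hmem (Finset.notMem_empty _)
  have hXO : ∀ i, 2 ≤ i → i + 1 ≤ n → ¬(i ∈ S ∧ i ∈ T ∧ (i+1) ∉ S ∧ (i+1) ∉ T) := by
    intro i h2 hi hcon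
    have hmem : i ∈ Dset n S T :=
      Finset.mem_filter.mpr ⟨Finset.mem_Icc.mpr ⟨h2, by omega⟩, Or.inr hcon⟩
    rw [hD] at hmem
    exact absurd hmem (Finset.notMem_empty _)
  have claimA : ∀ i, 2 ≤ i → i + 1 ≤ n → (i+1) ∈ S → (i+1) ∉ T → i ∈ S ∧ i ∉ T := by
    intro i h2 hi hS1 hT1
    by_cases hiS : i ∈ S
    · by_cases hiT : i ∈ T
      · exfalso
        apply (hne i (i+1) h2 (by omega) (by omega)).1
        unfold vfn
        rw [if_pos hiS, if_pos hiT, if_pos hS1, if_neg hT1]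
        push_cast
        ring
      · exact ⟨hiS, hiT⟩
    · by_cases hiT : i ∈ T
      · exact absurd ⟨hiT, hiS, hS1, hT1⟩ (hZ i h2 hi)
      · exfalso
        apply (hne i (i+1) h2 (by omega) (by omega)).1
        unfold vfn
        rw [if_neg hiS, if_neg hiT, if_pos hS1, if_neg hT1]
        push_cast
        ring
  have claimB : ∀ i, 2 ≤ i → i + 1 ≤ n → i ∈ T → i ∉ S → (i+1) ∈ T ∧ (i+1) ∉ S := by
    intro i h2 hi hiT hiS
    by_cases h1S : i+1 ∈ S
    · by_cases h1T : i+1 ∈ T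
      · exfalso
        apply (hne i (i+1) h2 (by omega) (by omega)).1
        unfold vfn
        rw [if_neg hiS, if_pos hiT, if_pos h1S, if_pos h1T]
        push_cast
        ring
      · exact absurd ⟨hiT, hiS, h1S, h1T⟩ (hZ i h2 hi)
    · by_cases h1T : i+1 ∈ T
      · exact ⟨h1T, h1S⟩
      · exfalso
        apply (hne i (i+1) h2 (by omega) (by omega)).1
        unfold vfn
        rw [if_neg hiS, if_pos hiT, if_neg h1S, if_neg h1T]
        push_cast
        ring
  have claimBc : ∀ i, 2 ≤ i → i ∈ T → i ∉ S → ∀ j, i ≤ j → j ≤ n → j ∈ T ∧ j ∉ S := by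
    intro i h2 hiT hiS
    have key : ∀ d j, j = i + d → j ≤ n → j ∈ T ∧ j ∉ S := by
      intro d
      induction d with
      | zero =>
        intro j hj _
        have hji : j = i := by omega
        rw [hji]
        exact ⟨hiT, hiS⟩
      | succ d ih =>
        intro j hj hjn
        have hprev := ih (i + d) rfl (by omega)
        have hstep := claimB (i+d) (by omega) (by omega) hprev.1 hprev.2
        rw [show j = i + d + 1 from by omega]
        exact hstep
    intro j hij hjn
    exact key (j - i) j (by omega) hjn
  have claimC : ∀ i, i ∈ T → i ∉ S → n - 1 ≤ i := by
    intro i hiT hiS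
    by_contra hlt
    push_neg at hlt
    have h2 : 2 ≤ i := (Finset.mem_Icc.mp (hT hiT)).1
    have ha := claimBc i h2 hiT hiS (n-2) (by omega) (by omega)
    have hb := claimBc i h2 hiT hiS n (by omega) le_rfl
    apply (hne (n-2) n (by omega) (by omega) le_rfl).2
    unfold vfn
    rw [if_neg ha.2, if_pos ha.1, if_neg hb.2, if_pos hb.1]
    push_cast [Nat.cast_sub (by omega : 2 ≤ n)]
    ring
  -- common: the prefix S \ T is an initial interval
  have hPreLow : ∀ i, 2 ≤ i → i + 1 ∈ S \ T → i ∈ S \ T := by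
    intro i h2 h1
    rw [Finset.mem_sdiff] at h1 ⊢
    have hi : i + 1 ≤ n := (Finset.mem_Icc.mp (hS h1.1)).2
    exact claimA i h2 hi h1.1 h1.2
  have hPreint : S \ T = Finset.Icc 2 ((S \ T).card + 1) :=
    lower_interval (Finset.Subset.trans (Finset.sdiff_subset) hS) hPreLow
  set p := (S \ T).card with hp
  by_cases hTS : ∀ x ∈ T, x ∈ S
  · -- Case 1 : no "minus" entries
    have hXup : ∀ i, i + 1 ≤ n → i ∈ T → i + 1 ∈ T := by
      intro i hi hiT
      have hiS : i ∈ S := hTS i hiT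
      have h2 : 2 ≤ i := (Finset.mem_Icc.mp (hT hiT)).1
      by_cases h1S : i+1 ∈ S
      · by_cases h1T : i+1 ∈ T
        · exact h1T
        · exact absurd hiT (claimA i h2 hi h1S h1T).2
      · by_cases h1T : i+1 ∈ T
        · exact absurd (hTS _ h1T) h1S
        · exact absurd ⟨hiS, hiT, h1S, h1T⟩ (hXO i h2 hi)
    have hTint : T = Finset.Icc (n + 1 - T.card) n := upper_interval hT hXup
    by_cases hTe : T = ∅
    · -- canonical, r ≤ n - 1
      rw [hTe, Finset.sdiff_empty] at hp
      rw [hTe, Finset.sdiff_empty] at hPreint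
      have hple : p ≤ n - 1 := by
        have h9 := Finset.card_le_card hS
        rw [Nat.card_Icc] at h9
        omega
      apply hc
      apply Finset.mem_union_left
      apply Finset.mem_image.mpr
      refine ⟨p, Finset.mem_range.mpr (by omega), ?_⟩
      rw [canPair, if_pos (by omega)]
      simp only [Prod.mk.injEq]
      exact ⟨hPreint.symm, hTe.symm⟩
    · -- T nonempty, no minus entries
      have hTne : T.Nonempty := Finset.nonempty_iff_ne_empty.mpr hTe
      have hTle : T.card ≤ n - 1 := by
        have := Finset.card_le_card hT
        rw [Nat.card_Icc] at this
        omega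
      have hTpos : 0 < T.card := Finset.card_pos.mpr hTne
      set c := n + 1 - T.card with hcdef
      have hc2 : 2 ≤ c := by omega
      have hcle : c ≤ n := by omega
      have hTc : T = Finset.Icc c n := hTint
      have hdisj : p + 2 ≤ c := by
        by_cases hp0 : p = 0
        · omega
        · have hmem : p + 1 ∈ S \ T := by
            rw [hPreint]
            exact Finset.mem_Icc.mpr ⟨by omega, le_rfl⟩
          obtain ⟨h1, h2'⟩ := Finset.mem_sdiff.mp hmem
          have h3 : p + 1 ≤ n := (Finset.mem_Icc.mp (hS h1)).2
          rw [hTc, Finset.mem_Icc] at h2'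
          omega
      have hScup : S = Finset.Icc 2 (p+1) ∪ Finset.Icc c n := by
        ext x
        rw [Finset.mem_union, ← hTc, ← hPreint]
        constructor
        · intro hx
          by_cases hxT : x ∈ T
          · exact Or.inr hxT
          · exact Or.inl (Finset.mem_sdiff.mpr ⟨hx, hxT⟩)
        · rintro (hx | hx)
          · exact (Finset.mem_sdiff.mp hx).1
          · exact hTS x hx
      by_cases hcp : c = p + 2
      · apply hc
        apply Finset.mem_union_left
        apply Finset.mem_image.mpr
        refine ⟨2*n - c, Finset.mem_range.mpr (by omega), ?_⟩
        rw [canPair, if_neg (by omega)]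
        simp only [Prod.mk.injEq]
        constructor
        · rw [hScup, hcp]
          ext x
          simp only [Finset.mem_union, Finset.mem_Icc]
          omega
        · rw [show 2*n - (2*n - c) = c from by omega, hTc]
      · apply hF2
        refine ⟨?_, ?_, ?_⟩
        · show (S, T) = F2pair n (pOf (S,T)) (cOf n (S,T))
          rw [show pOf (S,T) = p from rfl, show cOf n (S,T) = c from rfl, F2pair]
          simp only [Prod.mk.injEq]
          exact ⟨hScup, hTc⟩
        · rw [show pOf (S,T) = p from rfl, show cOf n (S,T) = c from rfl]
          omega
        · rw [show cOf n (S,T) = c from rfl]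
          omega
  · -- Case 2 : some minus entry exists
    push_neg at hTS
    obtain ⟨i0, hi0T, hi0S⟩ := hTS
    have hi0n : n - 1 ≤ i0 := claimC i0 hi0T hi0S
    have hi0le : i0 ≤ n := (Finset.mem_Icc.mp (hT hi0T)).2
    by_cases hnm : n - 1 ∈ T ∧ n - 1 ∉ S
    · -- the `E`-tail case : this is an `F1` pair, contradiction
      have hstep := claimB (n-1) (by omega) (by omega) hnm.1 hnm.2
      rw [show n - 1 + 1 = n from by omega] at hstep
      have hXsub : S ∩ T ⊆ Finset.Icc 2 (n-2) := by
        intro x hx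
        obtain ⟨hxS, hxT⟩ := Finset.mem_inter.mp hx
        have h2 : 2 ≤ x := (Finset.mem_Icc.mp (hS hxS)).1
        have hxn : x ≤ n := (Finset.mem_Icc.mp (hS hxS)).2
        have hx1 : x ≠ n - 1 := fun h => hnm.2 (h ▸ hxS)
        have hx2 : x ≠ n := fun h => hstep.2 (h ▸ hxS)
        exact Finset.mem_Icc.mpr ⟨h2, by omega⟩
      have hXup2 : ∀ i', i' + 1 ≤ n - 2 → i' ∈ S ∩ T → i' + 1 ∈ S ∩ T := by
        intro i' hi' hx
        obtain ⟨hxS, hxT⟩ := Finset.mem_inter.mp hx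
        have h2 : 2 ≤ i' := (Finset.mem_Icc.mp (hS hxS)).1
        by_cases h1S : i'+1 ∈ S
        · by_cases h1T : i'+1 ∈ T
          · exact Finset.mem_inter.mpr ⟨h1S, h1T⟩
          · exact absurd hxT (claimA i' h2 (by omega) h1S h1T).2
        · by_cases h1T : i'+1 ∈ T
          · exact absurd (claimC _ h1T h1S) (by omega)
          · exact absurd ⟨hxS, hxT, h1S, h1T⟩ (hXO i' h2 (by omega))
      have hXint : S ∩ T = Finset.Icc (n - 2 + 1 - (S ∩ T).card) (n-2) :=
        upper_interval hXsub hXup2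
      set c' := n - 2 + 1 - (S ∩ T).card with hc'def
      have hXcard : (S ∩ T).card ≤ n - 3 := by
        have := Finset.card_le_card hXsub
        rw [Nat.card_Icc] at this
        omega
      have hc'2 : 2 ≤ c' := by omega
      have hc'le : c' ≤ n - 1 := by omega
      have hTeq : T = Finset.Icc c' n := by
        ext x
        rw [Finset.mem_Icc]
        constructor
        · intro hxT
          have hxn : x ≤ n := (Finset.mem_Icc.mp (hT hxT)).2
          by_cases hxS : x ∈ S
          · have hxm : x ∈ S ∩ T := Finset.mem_inter.mpr ⟨hxS, hxT⟩
            rw [hXint, Finset.mem_Icc] at hxm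
            omega
          · have := claimC x hxT hxS
            omega
        · rintro ⟨hx1, hx2⟩
          by_cases hxe : x ≤ n - 2
          · have hxm : x ∈ S ∩ T := by
              rw [hXint, Finset.mem_Icc]
              omega
            exact (Finset.mem_inter.mp hxm).2
          · rcases (by omega : x = n - 1 ∨ x = n) with rfl | rfl
            · exact hnm.1
            · exact hstep.1
      have hTcard : T.card = n + 1 - c' := by rw [hTeq, Nat.card_Icc]
      have hdisj : p + 2 ≤ c' := by
        by_cases hp0 : p = 0
        · omega
        · have hmem : p + 1 ∈ S \ T := by
            rw [hPreint]
            exact Finset.mem_Icc.mpr ⟨by omega, le_rfl⟩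
          obtain ⟨h1, h2'⟩ := Finset.mem_sdiff.mp hmem
          have h3 : p + 1 ≤ n := (Finset.mem_Icc.mp (hS h1)).2
          rw [hTeq, Finset.mem_Icc] at h2'
          omega
      have hSeq : S = Finset.Icc 2 (p+1) ∪ Finset.Icc c' (n-2) := by
        ext x
        rw [Finset.mem_union, ← hXint, ← hPreint]
        constructor
        · intro hx
          by_cases hxT : x ∈ T
          · exact Or.inr (Finset.mem_inter.mpr ⟨hx, hxT⟩)
          · exact Or.inl (Finset.mem_sdiff.mpr ⟨hx, hxT⟩)
        · rintro (hx | hx)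
          · exact (Finset.mem_sdiff.mp hx).1
          · exact (Finset.mem_inter.mp hx).1
      apply hF1
      refine ⟨?_, ?_, ?_⟩
      · show (S, T) = F1pair n (pOf (S,T)) (cOf n (S,T))
        have hcOf : cOf n (S, T) = c' := by
          show n + 1 - T.card = c'
          omega
        rw [show pOf (S,T) = p from rfl, hcOf, F1pair]
        simp only [Prod.mk.injEq]
        exact ⟨hSeq, hTeq⟩
      · rw [show pOf (S,T) = p from rfl, show cOf n (S,T) = c' from by
          show n + 1 - T.card = c'; omega]
        omega
      · rw [show cOf n (S,T) = c' from by show n + 1 - T.card = c'; omega]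
        omega
    · -- the `λ̄` case : the pair is `lamPair`, contradiction
      have hi0eq : i0 = n := by
        rcases (by omega : i0 = n - 1 ∨ i0 = n) with h | h
        · exact absurd ⟨h ▸ hi0T, h ▸ hi0S⟩ hnm
        · exact h
      rw [hi0eq] at hi0T hi0S
      have hn1 : n - 1 ∈ S ∧ n - 1 ∉ T := by
        by_cases haS : n - 1 ∈ S
        · by_cases haT : n - 1 ∈ T
          · exfalso
            apply (hne (n-1) n (by omega) (by omega) le_rfl).2
            unfold vfn
            rw [if_pos haS, if_pos haT, if_neg hi0S, if_pos hi0T]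
            push_cast [Nat.cast_sub (by omega : 1 ≤ n)]
            ring
          · exact ⟨haS, haT⟩
        · by_cases haT : n - 1 ∈ T
          · exact absurd ⟨haT, haS⟩ hnm
          · exfalso
            apply (hne (n-1) n (by omega) (by omega) le_rfl).2
            unfold vfn
            rw [if_neg haS, if_neg haT, if_neg hi0S, if_pos hi0T]
            push_cast [Nat.cast_sub (by omega : 1 ≤ n)]
            ring
      have hmem : n - 1 ∈ S \ T := Finset.mem_sdiff.mpr hn1
      rw [hPreint, Finset.mem_Icc] at hmem
      have hXe : S ∩ T = ∅ := by
        rw [Finset.eq_empty_iff_forall_notMem]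
        intro x hx
        obtain ⟨hxS, hxT⟩ := Finset.mem_inter.mp hx
        have hxn : x ≤ n := (Finset.mem_Icc.mp (hS hxS)).2
        have hx2 : 2 ≤ x := (Finset.mem_Icc.mp (hS hxS)).1
        have hxne : x ≠ n := fun h => hi0S (h ▸ hxS)
        have hxp : x ∈ S \ T := by
          rw [hPreint, Finset.mem_Icc]
          omega
        exact (Finset.mem_sdiff.mp hxp).2 hxT
      have hTsing : T = {n} := by
        ext x
        rw [Finset.mem_singleton]
        constructor
        · intro hxT
          by_cases hxS : x ∈ S
          · exact absurd (Finset.mem_inter.mpr ⟨hxS, hxT⟩)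
              (by rw [hXe]; exact Finset.notMem_empty x)
          · have h1 := claimC x hxT hxS
            have hxn : x ≤ n := (Finset.mem_Icc.mp (hT hxT)).2
            rcases (by omega : x = n - 1 ∨ x = n) with h | h
            · exact absurd ⟨h ▸ hxT, h ▸ hxS⟩ hnm
            · exact h
        · rintro rfl
          exact hi0T
      have hSeq : S = Finset.Icc 2 (n-1) := by
        have hple : p + 1 ≤ n - 1 := by
          by_contra hgt
          push_neg at hgt
          have hnmem : n ∈ S \ T := by
            rw [hPreint, Finset.mem_Icc]
            omega
          exact hi0S (Finset.mem_sdiff.mp hnmem).1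
        ext x
        rw [Finset.mem_Icc]
        constructor
        · intro hxS
          have hx2 : 2 ≤ x := (Finset.mem_Icc.mp (hS hxS)).1
          by_cases hxT : x ∈ T
          · exact absurd (Finset.mem_inter.mpr ⟨hxS, hxT⟩)
              (by rw [hXe]; exact Finset.notMem_empty x)
          · have hxp : x ∈ S \ T := Finset.mem_sdiff.mpr ⟨hxS, hxT⟩
            rw [hPreint, Finset.mem_Icc] at hxp
            omega
        · rintro ⟨hx1, hx2⟩
          have hxp : x ∈ S \ T := by
            rw [hPreint, Finset.mem_Icc]
            omega
          exact (Finset.mem_sdiff.mp hxp).1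
      apply hc
      apply Finset.mem_union_right
      rw [Finset.mem_singleton, lamPair]
      simp only [Prod.mk.injEq]
      exact ⟨hSeq, hTsing⟩

end Structure
section CanLemmas
variable {n k : ℕ}

lemma pOf_F1 {p c : ℕ} (hn : 4 ≤ n) (hpc : p + 2 ≤ c) (hc : c ≤ n - 1) :
    pOf (F1pair n p c) = p := by
  have he : (F1pair n p c).1 \ (F1pair n p c).2 = Finset.Icc 2 (p+1) := by
    ext x
    simp only [F1pair, Finset.mem_sdiff, Finset.mem_union, Finset.mem_Icc]
    omega
  rw [pOf, he, Nat.card_Icc]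
  omega

lemma cOf_F1 {p c : ℕ} (hn : 4 ≤ n) (hpc : p + 2 ≤ c) (hc : c ≤ n - 1) :
    cOf n (F1pair n p c) = c := by
  rw [cOf, (F1_cards hn hpc hc).2]
  omega

lemma pOf_F2 {p c : ℕ} (hn : 4 ≤ n) (hpc : p + 3 ≤ c) (hc : c ≤ n) :
    pOf (F2pair n p c) = p := by
  have he : (F2pair n p c).1 \ (F2pair n p c).2 = Finset.Icc 2 (p+1) := by
    ext x
    simp only [F2pair, Finset.mem_sdiff, Finset.mem_union, Finset.mem_Icc]
    omega
  rw [pOf, he, Nat.card_Icc]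
  omega

lemma cOf_F2 {p c : ℕ} (hn : 4 ≤ n) (hpc : p + 3 ≤ c) (hc : c ≤ n) :
    cOf n (F2pair n p c) = c := by
  rw [cOf, (F2_cards hn hpc hc).2]
  omega

lemma IsF1_F1pair {p c : ℕ} (hn : 4 ≤ n) (hpc : p + 2 ≤ c) (hc : c ≤ n - 1) :
    IsF1 n (F1pair n p c) := by
  refine ⟨?_, ?_, ?_⟩
  · rw [pOf_F1 hn hpc hc, cOf_F1 hn hpc hc]
  · rw [pOf_F1 hn hpc hc, cOf_F1 hn hpc hc]; exact hpc
  · rw [cOf_F1 hn hpc hc]; exact hc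

lemma IsF2_F2pair {p c : ℕ} (hn : 4 ≤ n) (hpc : p + 3 ≤ c) (hc : c ≤ n) :
    IsF2 n (F2pair n p c) := by
  refine ⟨?_, ?_, ?_⟩
  · rw [pOf_F2 hn hpc hc, cOf_F2 hn hpc hc]
  · rw [pOf_F2 hn hpc hc, cOf_F2 hn hpc hc]; exact hpc
  · rw [cOf_F2 hn hpc hc]; exact hc

lemma not_IsF1_F2pair {p c : ℕ} (hn : 4 ≤ n) (hpc : p + 3 ≤ c) (hc : c ≤ n) :
    ¬ IsF1 n (F2pair n p c) := by
  rintro ⟨heq, -, -⟩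
  rw [pOf_F2 hn hpc hc, cOf_F2 hn hpc hc] at heq
  have hS := congrArg Prod.fst heq
  have hmem : n ∈ (F2pair n p c).1 := by
    simp only [F2pair, Finset.mem_union, Finset.mem_Icc]
    omega
  rw [hS] at hmem
  simp only [F1pair, Finset.mem_union, Finset.mem_Icc] at hmem
  omega

lemma notCan_F1pair {p c : ℕ} (hn : 4 ≤ n) (hpc : p + 2 ≤ c) (hc : c ≤ n - 1) :
    F1pair n p c ∉ Can n := by
  intro h
  rw [Can, Finset.mem_union, Finset.mem_image, Finset.mem_singleton] at h
  rcases h with ⟨r, hr, heq⟩ | heq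
  · rw [Finset.mem_range] at hr
    by_cases hb : r + 1 ≤ n
    · rw [canPair, if_pos hb] at heq
      have hT := congrArg Prod.snd heq
      have : n ∈ (F1pair n p c).2 := by
        simp only [F1pair, Finset.mem_Icc]; omega
      rw [← hT] at this
      exact absurd this (Finset.notMem_empty n)
    · rw [canPair, if_neg hb, F1pair, Prod.mk.injEq] at heq
      obtain ⟨hS, hT⟩ := heq
      have h9 : n ∈ Finset.Icc 2 n := Finset.mem_Icc.mpr (by omega)
      rw [hS, Finset.mem_union] at h9
      simp only [Finset.mem_Icc] at h9
      omega
  · have hT := congrArg Prod.snd heq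
    have : n - 1 ∈ (F1pair n p c).2 := by
      simp only [F1pair, Finset.mem_Icc]; omega
    rw [hT] at this
    simp only [lamPair, Finset.mem_singleton] at this
    omega

lemma notCan_F2pair {p c : ℕ} (hn : 4 ≤ n) (hpc : p + 3 ≤ c) (hc : c ≤ n) :
    F2pair n p c ∉ Can n := by
  intro h
  rw [Can, Finset.mem_union, Finset.mem_image, Finset.mem_singleton] at h
  rcases h with ⟨r, hr, heq⟩ | heq
  · rw [Finset.mem_range] at hr
    by_cases hb : r + 1 ≤ n
    · rw [canPair, if_pos hb] at heq
      have hT := congrArg Prod.snd heq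
      have : n ∈ (F2pair n p c).2 := by
        simp only [F2pair, Finset.mem_Icc]; omega
      rw [← hT] at this
      exact absurd this (Finset.notMem_empty n)
    · rw [canPair, if_neg hb, F2pair, Prod.mk.injEq] at heq
      obtain ⟨hS, hT⟩ := heq
      have h9 : p + 2 ∈ Finset.Icc 2 n := Finset.mem_Icc.mpr (by omega)
      rw [hS, Finset.mem_union] at h9
      simp only [Finset.mem_Icc] at h9
      omega
  · have hT := congrArg Prod.snd heq
    have : n - 1 ∈ (F2pair n p c).2 ↔ n - 1 ∈ ({n} : Finset ℕ) := by
      rw [hT, lamPair]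
    simp only [F2pair, Finset.mem_Icc, Finset.mem_singleton] at this
    -- from this : (c ≤ n-1 ∧ n-1 ≤ n) ↔ n-1 = n
    by_cases hcn : c ≤ n - 1
    · have := this.mp ⟨hcn, by omega⟩
      omega
    · -- c = n, so T = {n}; compare S
      have hS := congrArg Prod.fst heq
      have h2 : n - 1 ∈ Finset.Icc 2 (n-1) := Finset.mem_Icc.mpr (by omega)
      rw [show (lamPair n).1 = Finset.Icc 2 (n-1) from rfl] at hS
      rw [← hS] at h2
      simp only [F2pair, Finset.mem_union, Finset.mem_Icc] at h2
      omega

lemma Dset_Can_empty (hn : 4 ≤ n) {ST : Finset ℕ × Finset ℕ} (h : ST ∈ Can n) :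
    Dset n ST.1 ST.2 = ∅ := by
  rw [Can, Finset.mem_union, Finset.mem_image, Finset.mem_singleton] at h
  rw [Dset, Finset.filter_eq_empty_iff]
  intro i hi
  rw [Finset.mem_Icc] at hi
  rcases h with ⟨r, hr, rfl⟩ | rfl
  · rw [Finset.mem_range] at hr
    by_cases hb : r + 1 ≤ n
    · rw [canPair, if_pos hb]
      unfold defect
      simp only [Finset.notMem_empty]
      tauto
    · rw [canPair, if_neg hb]
      unfold defect
      simp only [Finset.mem_Icc]
      omega
  · unfold defect lamPair
    simp only [Finset.mem_Icc, Finset.mem_singleton]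
    omega

lemma canPair_weight (hn : 4 ≤ n) {r : ℕ} (hr : r < 2*n - 1) :
    (canPair n r).1.card + (canPair n r).2.card = r := by
  by_cases hb : r + 1 ≤ n
  · rw [canPair, if_pos hb]
    simp only [Finset.card_empty]
    rw [Nat.card_Icc]
    omega
  · rw [canPair, if_neg hb]
    simp only
    rw [Nat.card_Icc, Nat.card_Icc]
    omega

lemma canPair_subsets (hn : 4 ≤ n) {r : ℕ} (hr : r < 2*n - 1) :
    (canPair n r).1 ⊆ Finset.Icc 2 n ∧ (canPair n r).2 ⊆ Finset.Icc 2 n := by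
  by_cases hb : r + 1 ≤ n
  · rw [canPair, if_pos hb]
    constructor
    · exact Finset.Icc_subset_Icc_right (by omega)
    · simp
  · rw [canPair, if_neg hb]
    constructor
    · exact Finset.Subset.refl _
    · exact Finset.Icc_subset_Icc_left (by omega)

lemma lamPair_subsets (hn : 4 ≤ n) :
    (lamPair n).1 ⊆ Finset.Icc 2 n ∧ (lamPair n).2 ⊆ Finset.Icc 2 n := by
  constructor
  · exact Finset.Icc_subset_Icc_right (by omega)
  · intro x hx
    rw [lamPair] at hx
    simp only [Finset.mem_singleton] at hx
    rw [hx, Finset.mem_Icc]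
    omega

lemma lamPair_weight (hn : 4 ≤ n) :
    (lamPair n).1.card + (lamPair n).2.card = n - 1 := by
  rw [lamPair]
  simp only [Finset.card_singleton]
  rw [Nat.card_Icc]
  omega

end CanLemmas
section CanSum
variable {n k : ℕ}

lemma eps_apply (i : ℕ) (j : Fin n) : eps n i j = if (j : ℕ) + 1 = i then 1 else 0 := rfl

lemma muST_canPair (hn : 4 ≤ n) {r : ℕ} (hr : r < 2*n - 1) :
    muST n k (canPair n r).1 (canPair n r).2 = lamD n k r + rhoD n := by
  funext j
  have hjn : (j : ℕ) < n := j.isLt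
  have hlam : (lamD n k r + rhoD n) j
      = ((k : ℚ) - r) * (if (j : ℕ) + 1 = 1 then 1 else 0)
        + (if ((j : ℕ) + 1) ∈ Finset.Icc 2 (min r (2*n - 2 - r) + 1) then 1 else 0)
        + rhoD n j := by
    simp only [lamD, Pi.add_apply, Pi.smul_apply, smul_eq_mul]
    rw [Finset.sum_apply, sum_eps, eps_apply]
  rw [muST_apply, hlam]
  by_cases hb : r + 1 ≤ n
  · have hmin : min r (2*n - 2 - r) = r := by omega
    have h1 : (canPair n r).1 = Finset.Icc 2 (r+1) := by rw [canPair, if_pos hb]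
    have h2 : (canPair n r).2 = (∅ : Finset ℕ) := by rw [canPair, if_pos hb]
    rw [h1, h2, hmin, Finset.card_empty, Nat.card_Icc,
      show r + 1 + 1 - 2 = r from by omega]
    rw [if_neg (Finset.notMem_empty _)]
    by_cases hj : (j : ℕ) = 0
    · rw [if_pos hj, if_pos (by omega : (j:ℕ) + 1 = 1)]
      rw [if_neg (by rw [Finset.mem_Icc]; omega : ¬ ((j:ℕ) + 1) ∈ Finset.Icc 2 (r+1))]
      push_cast
      ring
    · rw [if_neg hj, if_neg (by omega : ¬ ((j:ℕ) + 1 = 1))]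
      ring
  · have hmin : min r (2*n - 2 - r) = 2*n - 2 - r := by omega
    have h1 : (canPair n r).1 = Finset.Icc 2 n := by rw [canPair, if_neg hb]
    have h2 : (canPair n r).2 = Finset.Icc (2*n - r) n := by rw [canPair, if_neg hb]
    rw [h1, h2, hmin, Nat.card_Icc, Nat.card_Icc]
    have e1 : ((n + 1 - 2 : ℕ) : ℚ) = (n : ℚ) - 1 := by
      rw [Nat.cast_sub (by omega : 2 ≤ n + 1)]
      push_cast
      ring
    have e2 : ((n + 1 - (2*n - r) : ℕ) : ℚ) = (r : ℚ) - n + 1 := by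
      rw [Nat.cast_sub (by omega : 2*n - r ≤ n + 1), Nat.cast_sub (by omega : r ≤ 2*n)]
      push_cast
      ring
    by_cases hj : (j : ℕ) = 0
    · rw [if_pos hj, if_pos (by omega : (j:ℕ) + 1 = 1)]
      rw [if_neg (by rw [Finset.mem_Icc]; omega : ¬ ((j:ℕ) + 1) ∈ Finset.Icc 2 n)]
      rw [if_neg (by rw [Finset.mem_Icc]; omega : ¬ ((j:ℕ) + 1) ∈ Finset.Icc (2*n - r) n)]
      rw [if_neg (by rw [Finset.mem_Icc]; omega :
        ¬ ((j:ℕ) + 1) ∈ Finset.Icc 2 (2*n - 2 - r + 1))]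
      rw [e1, e2]
      push_cast
      ring
    · rw [if_neg hj, if_neg (by omega : ¬ ((j:ℕ) + 1 = 1))]
      rw [if_pos (by rw [Finset.mem_Icc]; omega : ((j:ℕ) + 1) ∈ Finset.Icc 2 n)]
      by_cases hin : 2*n - r ≤ (j : ℕ) + 1
      · rw [if_pos (by rw [Finset.mem_Icc]; omega :
          ((j:ℕ) + 1) ∈ Finset.Icc (2*n - r) n)]
        rw [if_neg (by rw [Finset.mem_Icc]; omega :
          ¬ ((j:ℕ) + 1) ∈ Finset.Icc 2 (2*n - 2 - r + 1))]
        ring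
      · rw [if_neg (by rw [Finset.mem_Icc]; omega :
          ¬ ((j:ℕ) + 1) ∈ Finset.Icc (2*n - r) n)]
        rw [if_pos (by rw [Finset.mem_Icc]; omega :
          ((j:ℕ) + 1) ∈ Finset.Icc 2 (2*n - 2 - r + 1))]
        ring

lemma muST_lamPair (hn : 4 ≤ n) :
    muST n k (lamPair n).1 (lamPair n).2 = lamDbar n k + rhoD n := by
  funext j
  have hjn : (j : ℕ) < n := j.isLt
  have hbar : (lamDbar n k + rhoD n) j
      = ((k : ℚ) - n + 1) * (if (j : ℕ) + 1 = 1 then 1 else 0)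
        + (if ((j : ℕ) + 1) ∈ Finset.Icc 2 (n - 1) then 1 else 0)
        - (if (j : ℕ) + 1 = n then 1 else 0)
        + rhoD n j := by
    simp only [lamDbar, Pi.add_apply, Pi.sub_apply, Pi.smul_apply, smul_eq_mul]
    rw [Finset.sum_apply, sum_eps, eps_apply, eps_apply]
  rw [muST_apply, hbar]
  have h1 : (lamPair n).1 = Finset.Icc 2 (n-1) := rfl
  have h2 : (lamPair n).2 = ({n} : Finset ℕ) := rfl
  rw [h1, h2, Nat.card_Icc, Finset.card_singleton,
    show n - 1 + 1 - 2 = n - 2 from by omega]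
  rw [if_congr (Finset.mem_singleton : ((j:ℕ)+1) ∈ ({n} : Finset ℕ) ↔ _) rfl rfl]
  by_cases hj : (j : ℕ) = 0
  · rw [if_pos hj, if_pos (by omega : (j:ℕ) + 1 = 1)]
    rw [if_neg (by rw [Finset.mem_Icc]; omega : ¬ ((j:ℕ) + 1) ∈ Finset.Icc 2 (n-1))]
    rw [if_neg (by omega : ¬ ((j:ℕ) + 1 = n))]
    rw [Nat.cast_sub (by omega : 2 ≤ n)]
    push_cast
    ring
  · rw [if_neg hj, if_neg (by omega : ¬ ((j:ℕ) + 1 = 1))]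
    ring

lemma lamPair_notin_image (hn : 4 ≤ n) :
    lamPair n ∉ (Finset.range (2*n-1)).image (canPair n) := by
  intro h
  obtain ⟨r, hr, heq⟩ := Finset.mem_image.mp h
  have h1 := canPair_weight hn (Finset.mem_range.mp hr)
  rw [heq, lamPair_weight hn] at h1
  rw [← h1] at heq
  rw [canPair, if_pos (by omega), lamPair, Prod.mk.injEq] at heq
  obtain ⟨-, hT⟩ := heq
  have : n ∈ (∅ : Finset ℕ) := by rw [hT]; exact Finset.mem_singleton_self n
  exact absurd this (Finset.notMem_empty n)

lemma sum_Can (hn : 4 ≤ n) :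
    (∑ ST ∈ Can n, ((-(qK⁻¹ ^ 2)) ^ (ST.1.card + ST.2.card))
        • asymD (expo (muST n k ST.1 ST.2)))
      = (∑ r ∈ Finset.range (2 * n - 1),
          algebraMap KK (RG n) ((-(qK⁻¹ ^ 2)) ^ r) * asymD (expo (lamD n k r + rhoD n)))
        + algebraMap KK (RG n) ((-(qK⁻¹ ^ 2)) ^ (n - 1)) *
            asymD (expo (lamDbar n k + rhoD n)) := by
  rw [Can, Finset.sum_union (Finset.disjoint_singleton_right.mpr (lamPair_notin_image hn))]
  congr 1
  · rw [Finset.sum_image (fun x hx y hy he => by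
      have h1 := canPair_weight hn (Finset.mem_range.mp hx)
      have h2 := canPair_weight hn (Finset.mem_range.mp hy)
      rw [he] at h1
      omega)]
    refine Finset.sum_congr rfl (fun r hr => ?_)
    rw [canPair_weight hn (Finset.mem_range.mp hr),
      muST_canPair hn (Finset.mem_range.mp hr), Algebra.smul_def]
  · rw [Finset.sum_singleton, lamPair_weight hn, muST_lamPair hn, Algebra.smul_def]

end CanSum
section Main
variable {n k : ℕ}

/-- the summand of the expanded antisymmetrized `H_k` -/
def FF (n k : ℕ) (ST : Finset ℕ × Finset ℕ) : RG n :=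
  ((-(qK⁻¹ ^ 2)) ^ (ST.1.card + ST.2.card)) • asymD (expo (muST n k ST.1 ST.2))

lemma FF_apply (S T : Finset ℕ) :
    FF n k (S, T) = ((-(qK⁻¹ ^ 2)) ^ (S.card + T.card)) • asymD (expo (muST n k S T)) := rfl

lemma F1pair_subsets {p c : ℕ} (hn : 4 ≤ n) (hpc : p + 2 ≤ c) (hc : c ≤ n - 1) :
    (F1pair n p c).1 ⊆ Finset.Icc 2 n ∧ (F1pair n p c).2 ⊆ Finset.Icc 2 n := by
  constructor
  · intro x hx
    simp only [F1pair, Finset.mem_union, Finset.mem_Icc] at hx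
    rw [Finset.mem_Icc]
    omega
  · intro x hx
    simp only [F1pair, Finset.mem_Icc] at hx
    rw [Finset.mem_Icc]
    omega

lemma F2pair_subsets {p c : ℕ} (hn : 4 ≤ n) (hpc : p + 3 ≤ c) (hc : c ≤ n) :
    (F2pair n p c).1 ⊆ Finset.Icc 2 n ∧ (F2pair n p c).2 ⊆ Finset.Icc 2 n := by
  constructor
  · intro x hx
    simp only [F2pair, Finset.mem_union, Finset.mem_Icc] at hx
    rw [Finset.mem_Icc]
    omega
  · intro x hx
    simp only [F2pair, Finset.mem_Icc] at hx
    rw [Finset.mem_Icc]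
    omega

lemma gmap_master (hn : 4 ≤ n) (S T : Finset ℕ) (hS : S ⊆ Finset.Icc 2 n)
    (hT : T ⊆ Finset.Icc 2 n) (hnc : (S, T) ∉ Can n) :
    (FF n k (S, T) + FF n k (gmap n (S, T)) = 0) ∧
    (gmap n (S, T) = (S, T) → FF n k (S, T) = 0) ∧
    ((gmap n (S, T)).1 ⊆ Finset.Icc 2 n ∧ (gmap n (S, T)).2 ⊆ Finset.Icc 2 n) ∧
    (gmap n (S, T) ∉ Can n) ∧
    gmap n (gmap n (S, T)) = (S, T) := by
  by_cases hD : (Dset n S T).Nonempty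
  · -- toggle branch
    have hgeq : gmap n (S, T) = (tog S ((Dset n S T).min' hD), T) := by
      simp only [gmap]
      rw [dif_pos hD]
    set i := (Dset n S T).min' hD with hidef
    obtain ⟨hiIcc, hid⟩ := Finset.mem_filter.mp (Finset.min'_mem _ hD)
    rw [Finset.mem_Icc] at hiIcc
    have hi2 : 2 ≤ i := hiIcc.1
    have hi1 : i + 1 ≤ n := by omega
    obtain ⟨hD2, hmin2⟩ := Dset_tog_min (n := n) hD
    have hnot : gmap n (S, T) ≠ (S, T) := by
      rw [hgeq]
      intro hcon
      rw [Prod.mk.injEq] at hcon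
      have h9 := (tog_mem_left hid).1
      rw [hcon.1] at h9
      tauto
    refine ⟨?_, ?_, ?_, ?_, ?_⟩
    · rw [hgeq, FF_apply, FF_apply, tog_card hid, asymD_tog hi2 hi1 hid, smul_neg]
      exact add_neg_cancel _
    · intro hcon
      exact absurd hcon hnot
    · rw [hgeq]
      exact ⟨tog_subset hS hi2 hi1, hT⟩
    · rw [hgeq]
      intro hcan
      have h9 : Dset n (tog S i) T = ∅ := Dset_Can_empty hn hcan
      rw [h9] at hD2
      exact Finset.not_nonempty_empty hD2
    · rw [hgeq]
      simp only [gmap]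
      rw [dif_pos hD2, hmin2, tog_tog hid]
  · have hDe : Dset n S T = ∅ := Finset.not_nonempty_iff_eq_empty.mp hD
    by_cases hIs1 : IsF1 n (S, T)
    · obtain ⟨heq, hpc, hcle⟩ := hIs1
      set p := pOf (S, T) with hpdef
      set c := cOf n (S, T) with hcdef
      have hgeq : gmap n (S, T) = F2pair n p (c + 1) := by
        simp only [gmap]
        rw [dif_neg hD, if_pos ⟨heq, hpc, hcle⟩]
      have hpc2 : p + 3 ≤ c + 1 := by omega
      have hc2 : c + 1 ≤ n := by omega
      refine ⟨?_, ?_, ?_, ?_, ?_⟩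
      · rw [hgeq]
        nth_rewrite 1 [heq]
        simp only [FF]
        rw [F1F2_card_sum hn hpc hcle, asymD_F1F2 hn hpc hcle, smul_neg]
        exact add_neg_cancel _
      · rw [hgeq]
        intro hcon
        exfalso
        rw [heq] at hcon
        rw [F1pair, F2pair, Prod.mk.injEq] at hcon
        obtain ⟨-, hTcomp⟩ := hcon
        have h9 : c ∈ Finset.Icc c n := Finset.mem_Icc.mpr ⟨le_rfl, by omega⟩
        rw [← hTcomp, Finset.mem_Icc] at h9
        omega
      · rw [hgeq]
        exact F2pair_subsets hn hpc2 hc2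
      · rw [hgeq]
        exact notCan_F2pair hn hpc2 hc2
      · rw [hgeq]
        have hD' : ¬ (Dset n (F2pair n p (c+1)).1 (F2pair n p (c+1)).2).Nonempty := by
          rw [Dset_F2_empty hn hpc2 hc2]
          exact Finset.not_nonempty_empty
        simp only [gmap]
        rw [dif_neg hD', if_neg (not_IsF1_F2pair hn hpc2 hc2),
          if_pos (IsF2_F2pair hn hpc2 hc2)]
        rw [pOf_F2 hn hpc2 hc2, cOf_F2 hn hpc2 hc2]
        rw [show c + 1 - 1 = c from by omega, ← heq]
    · by_cases hIs2 : IsF2 n (S, T)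
      · obtain ⟨heq, hpc, hcle⟩ := hIs2
        set p := pOf (S, T) with hpdef
        set c := cOf n (S, T) with hcdef
        have hc1 : c - 1 + 1 = c := by omega
        have hpc' : p + 2 ≤ c - 1 := by omega
        have hc'le : c - 1 ≤ n - 1 := by omega
        have hgeq : gmap n (S, T) = F1pair n p (c - 1) := by
          simp only [gmap]
          rw [dif_neg hD, if_neg hIs1, if_pos ⟨heq, hpc, hcle⟩]
        refine ⟨?_, ?_, ?_, ?_, ?_⟩
        · rw [hgeq]
          nth_rewrite 1 [heq]
          rw [show F2pair n p c = F2pair n p (c - 1 + 1) from by rw [hc1]]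
          simp only [FF]
          rw [F1F2_card_sum hn hpc' hc'le, asymD_F1F2 hn hpc' hc'le, smul_neg]
          exact neg_add_cancel _
        · rw [hgeq]
          intro hcon
          exfalso
          rw [heq] at hcon
          rw [F1pair, F2pair, Prod.mk.injEq] at hcon
          obtain ⟨-, hTcomp⟩ := hcon
          have h9 : c - 1 ∈ Finset.Icc (c-1) n := Finset.mem_Icc.mpr ⟨le_rfl, by omega⟩
          rw [hTcomp, Finset.mem_Icc] at h9
          omega
        · rw [hgeq]
          exact F1pair_subsets hn hpc' hc'le
        · rw [hgeq]
          exact notCan_F1pair hn hpc' hc'le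
        · rw [hgeq]
          have hD' : ¬ (Dset n (F1pair n p (c-1)).1 (F1pair n p (c-1)).2).Nonempty := by
            rw [Dset_F1_empty hn hpc' hc'le]
            exact Finset.not_nonempty_empty
          simp only [gmap]
          rw [dif_neg hD', if_pos (IsF1_F1pair hn hpc' hc'le)]
          rw [pOf_F1 hn hpc' hc'le, cOf_F1 hn hpc' hc'le]
          rw [hc1, ← heq]
      · -- the null case
        have hnull : asymD (expo (muST n k S T)) = 0 :=
          null_structure hn hS hT hDe hIs1 hIs2 hnc
        have hgid : gmap n (S, T) = (S, T) := by
          simp only [gmap]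
          rw [dif_neg hD, if_neg hIs1, if_neg hIs2]
        refine ⟨?_, ?_, ?_, ?_, ?_⟩
        · rw [hgid, FF_apply, hnull, smul_zero, add_zero]
        · intro _
          rw [FF_apply, hnull, smul_zero]
        · rw [hgid]
          exact ⟨hS, hT⟩
        · rw [hgid]
          exact hnc
        · rw [hgid, hgid]

end Main
/-- Key intermediate identity in the proof of the type `D_n` character reformulation
theorem:
`A^D(H_k) = Σ_{r=0}^{2n-2} (-q⁻²)^r A^D(e^{λ_k^r + ρ}) + (-q⁻²)^{n-1} A^D(e^{λ̄_k^{n-1} + ρ})`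
in `R`. -/
theorem typeD_asymD_H_eq (n : ℕ) (hn : 4 ≤ n) (k : ℕ) :
    asymD (HD n k)
      = (∑ r ∈ Finset.range (2 * n - 1),
          algebraMap KK (RG n) ((-(qK⁻¹ ^ 2)) ^ r) * asymD (expo (lamD n k r + rhoD n)))
        + algebraMap KK (RG n) ((-(qK⁻¹ ^ 2)) ^ (n - 1)) *
            asymD (expo (lamDbar n k + rhoD n)) := by
  classical
  have e1 : asymD (HD n k)
      = ∑ p ∈ (Finset.Icc 2 n).powerset ×ˢ (Finset.Icc 2 n).powerset, FF n k p :=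
    asymD_HD n k
  have hCanSub : Can n ⊆ (Finset.Icc 2 n).powerset ×ˢ (Finset.Icc 2 n).powerset := by
    intro ST hST
    rw [Finset.mem_product, Finset.mem_powerset, Finset.mem_powerset]
    rw [Can, Finset.mem_union, Finset.mem_image, Finset.mem_singleton] at hST
    rcases hST with ⟨r, hr, rfl⟩ | rfl
    · exact canPair_subsets hn (Finset.mem_range.mp hr)
    · exact lamPair_subsets hn
  have hzero : (∑ ST ∈ ((Finset.Icc 2 n).powerset ×ˢ (Finset.Icc 2 n).powerset) \ Can n,
      FF n k ST) = 0 := by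
    apply Finset.sum_involution (g := fun ST _ => gmap n ST)
    · intro a ha
      obtain ⟨S, T⟩ := a
      rw [Finset.mem_sdiff, Finset.mem_product, Finset.mem_powerset, Finset.mem_powerset] at ha
      exact (gmap_master hn S T ha.1.1 ha.1.2 ha.2).1
    · intro a ha hFne
      obtain ⟨S, T⟩ := a
      rw [Finset.mem_sdiff, Finset.mem_product, Finset.mem_powerset, Finset.mem_powerset] at ha
      intro hcon
      exact hFne ((gmap_master hn S T ha.1.1 ha.1.2 ha.2).2.1 hcon)
    · intro a ha
      obtain ⟨S, T⟩ := a
      rw [Finset.mem_sdiff, Finset.mem_product, Finset.mem_powerset, Finset.mem_powerset] at ha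
      have m := gmap_master (k := k) hn S T ha.1.1 ha.1.2 ha.2
      rw [Finset.mem_sdiff, Finset.mem_product, Finset.mem_powerset, Finset.mem_powerset]
      exact ⟨⟨m.2.2.1.1, m.2.2.1.2⟩, m.2.2.2.1⟩
    · intro a ha
      obtain ⟨S, T⟩ := a
      rw [Finset.mem_sdiff, Finset.mem_product, Finset.mem_powerset, Finset.mem_powerset] at ha
      exact (gmap_master (k := k) hn S T ha.1.1 ha.1.2 ha.2).2.2.2.2
  have e2 : (∑ ST ∈ Can n, FF n k ST)
      = (∑ r ∈ Finset.range (2 * n - 1),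
          algebraMap KK (RG n) ((-(qK⁻¹ ^ 2)) ^ r) * asymD (expo (lamD n k r + rhoD n)))
        + algebraMap KK (RG n) ((-(qK⁻¹ ^ 2)) ^ (n - 1)) *
            asymD (expo (lamDbar n k + rhoD n)) := sum_Can hn
  rw [e1, ← Finset.sum_sdiff hCanSub, hzero, zero_add]
  exact e2
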